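/- arXiv:1410.1438 — 5 statements merged into one kernel-verified Lean document; each statement's English description precedes it below -/
import Mathlib

section
/- Let n and k be positive integers, let R be a graph on an n-element vertex set V that is a (k,2)-expander, and let P be a path with vertices in V such that P is a path of maximum length in the graph P∪R. Then at least (k+1)²/2 unordered pairs {v,w} of distinct vertices of V are boosters for the pair (P,R). -/
/-!
Pósa rotations. Let `Q₀` be a longest path of `G = P ∪ R`, from `c` to `d`, and let `S` be the
set of free ends of the paths obtained from `Q₀` by rotations fixing `d`. A neighbour `y ∉ S` of
some `x ∈ S` lies on the rotated path `Q` ending at `x` (by maximality), and the rotation at `y`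
puts the neighbour of `y` on `Q` towards `x` into `S`. Since every edge of `Q₀` lost along the
way touches `S`, if `y` had no `Q₀`-neighbour in `S` it would have strictly more neighbours on
`Q` than on `Q₀`, which is impossible for a vertex other than `c` of two paths ending at `d`. So
`N(S) \ S` consists of `Q₀`-neighbours of `S`, fewer than `2|S|` of them because `c ∈ S` has only
one; the expansion of `R` then forces `|S| ≥ k + 1`. Applied to `P` and then to each of these
`k + 1` paths reversed, this gives `k + 1` vertices of degree at least `k + 1` in the graph of
boosters, so it has at least `(k + 1)² / 2` edges.
-/

open Filter

/-- A `(k,r)`-expander: every vertex set `X` of size at most `k` satisfies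
`|N(X) \ X| ≥ r |X|`. -/
def IsExpander {V : Type*} (R : SimpleGraph V) (k r : ℝ) : Prop :=
  ∀ X : Set V, (X.ncard : ℝ) ≤ k →
    r * (X.ncard : ℝ) ≤ (({v | ∃ x ∈ X, R.Adj x v} \ X).ncard : ℝ)

/-- The graph whose edges are exactly the edges of the path `P`. -/
def pathGraph {V : Type*} {a b : V} (P : (⊤ : SimpleGraph V).Walk a b) : SimpleGraph V :=
  SimpleGraph.fromEdgeSet {e | e ∈ P.edges}

/-- `{v,w}` is a booster for the pair `(P,R)`: the graph `P ∪ R` contains a path with the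
same number of vertices as `P` whose two endpoints are `v` and `w`. -/
def IsBooster {V : Type*} (R : SimpleGraph V) {a b : V}
    (P : (⊤ : SimpleGraph V).Walk a b) (v w : V) : Prop :=
  v ≠ w ∧ ∃ Q : (pathGraph P ⊔ R).Walk v w, Q.IsPath ∧ Q.length = P.length

namespace SimpleGraph.Walk

variable {V : Type*} {G : SimpleGraph V} {u v w : V} {p : G.Walk u v}

lemma neighborSet_toSubgraph_of_nil (hp : p.Nil) (w : V) : p.toSubgraph.neighborSet w = ∅ := by
  cases hp
  ext
  simp

namespace IsPath

lemma ncard_neighborSet_toSubgraph_endpoint_le_one (hp : p.IsPath) :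
    (p.toSubgraph.neighborSet v).ncard ≤ 1 := by
  by_cases hnil : p.Nil
  · simp [neighborSet_toSubgraph_of_nil hnil]
  · simp [hp.neighborSet_toSubgraph_endpoint hnil]

lemma ncard_neighborSet_toSubgraph_startpoint_le_one (hp : p.IsPath) :
    (p.toSubgraph.neighborSet u).ncard ≤ 1 := by
  simpa using hp.reverse.ncard_neighborSet_toSubgraph_endpoint_le_one

lemma ncard_neighborSet_toSubgraph_of_ne (hp : p.IsPath) (hw : w ∈ p.support) (hwu : w ≠ u)
    (hwv : w ≠ v) : (p.toSubgraph.neighborSet w).ncard = 2 := by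
  obtain ⟨i, rfl, hi⟩ := mem_support_iff_exists_getVert.mp hw
  refine hp.ncard_neighborSet_toSubgraph_internal_eq_two ?_ ?_
  · rintro rfl
    exact hwu p.getVert_zero
  · refine lt_of_le_of_ne hi ?_
    rintro rfl
    exact hwv p.getVert_length

lemma ncard_neighborSet_toSubgraph_le_two (hp : p.IsPath) (w : V) :
    (p.toSubgraph.neighborSet w).ncard ≤ 2 := by
  by_cases hw : w ∈ p.support
  · by_cases hwu : w = u
    · exact hwu ▸ hp.ncard_neighborSet_toSubgraph_startpoint_le_one.trans one_le_two
    by_cases hwv : w = v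
    · exact hwv ▸ hp.ncard_neighborSet_toSubgraph_endpoint_le_one.trans one_le_two
    exact (hp.ncard_neighborSet_toSubgraph_of_ne hw hwu hwv).le
  · have : p.toSubgraph.neighborSet w = ∅ :=
      Set.eq_empty_of_forall_notMem fun _ hx => hw (mem_support_of_adj_toSubgraph hx)
    simp [this]

end IsPath

lemma ncard_neighborSet_toSubgraph_le_of_isPath {u' : V} {q : G.Walk u' v}
    (hp : p.IsPath) (hq : q.IsPath) (hw : w ∈ q.support) (hwu : w ≠ u') :
    (p.toSubgraph.neighborSet w).ncard ≤ (q.toSubgraph.neighborSet w).ncard := by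
  by_cases hwv : w = v
  · subst hwv
    rw [hq.neighborSet_toSubgraph_endpoint fun h => hwu h.eq.symm, Set.ncard_singleton]
    exact hp.ncard_neighborSet_toSubgraph_endpoint_le_one
  · rw [hq.ncard_neighborSet_toSubgraph_of_ne hw hwu hwv]
    exact hp.ncard_neighborSet_toSubgraph_le_two w

lemma exists_append_cons_eq_of_mem_support {x y : V} {Q : G.Walk x v} (hxy : x ≠ y)
    (hy : y ∈ Q.support) :
    ∃ (z : V) (q₁ : G.Walk x z) (hzy : G.Adj z y) (q₂ : G.Walk y v),
      q₁.append (cons hzy q₂) = Q := by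
  classical
  have hq : ¬ (Q.takeUntil y hy).Nil := fun hn => hxy hn.eq
  refine ⟨_, (Q.takeUntil y hy).dropLast, (Q.takeUntil y hy).adj_penultimate hq,
    Q.dropUntil y hy, ?_⟩
  rw [← concat_append, concat_dropLast, take_spec]

variable {c d : V}

/-- `Q` arises from `Q₀` by Pósa rotations: each replaces `q₁ ++ zy ++ q₂`, where `q₁` starts at
the free end `x` and `xy` is an edge, by `q₁⁻¹ ++ xy ++ q₂`, so the end `d` stays fixed. -/
inductive RotationReachable (Q₀ : G.Walk c d) : ∀ {x : V}, G.Walk x d → Prop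
  | refl : RotationReachable Q₀ Q₀
  | rotate {x z y : V} (q₁ : G.Walk x z) (hzy : G.Adj z y) (q₂ : G.Walk y d) (hxy : G.Adj x y) :
      RotationReachable Q₀ (q₁.append (cons hzy q₂)) →
        RotationReachable Q₀ (q₁.reverse.append (cons hxy q₂))

def rotationEnds (Q₀ : G.Walk c d) : Set V :=
  {x | ∃ Q : G.Walk x d, RotationReachable Q₀ Q}

namespace RotationReachable

variable {Q₀ : G.Walk c d} {x : V} {Q : G.Walk x d}

lemma start_mem_rotationEnds (h : RotationReachable Q₀ Q) : x ∈ rotationEnds Q₀ := ⟨Q, h⟩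

lemma support_perm (h : RotationReachable Q₀ Q) : Q.support.Perm Q₀.support := by
  induction h with
  | refl => rfl
  | rotate q₁ hzy q₂ hxy _ ih =>
    refine List.Perm.trans ?_ ih
    simpa [support_append] using q₁.support.reverse_perm.append_right q₂.support

lemma length_eq (h : RotationReachable Q₀ Q) : Q.length = Q₀.length := by
  induction h with
  | refl => rfl
  | rotate => simp_all [length_append]

lemma isPath (h : RotationReachable Q₀ Q) (h₀ : Q₀.IsPath) : Q.IsPath :=
  isPath_def _ |>.mpr <| h.support_perm.nodup_iff.mpr h₀.support_nodup

lemma toSubgraph_adj {a b : V} (h : RotationReachable Q₀ Q) (hab : Q₀.toSubgraph.Adj a b) :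
    Q.toSubgraph.Adj a b ∨ a ∈ rotationEnds Q₀ ∨ b ∈ rotationEnds Q₀ := by
  induction h with
  | refl => exact .inl hab
  | rotate q₁ hzy q₂ hxy h ih =>
    have hz := (h.rotate q₁ hzy q₂ hxy).start_mem_rotationEnds
    simp only [toSubgraph_append, toSubgraph_reverse, Walk.toSubgraph, Subgraph.sup_adj,
      subgraphOfAdj_adj] at ih ⊢
    rcases ih with (h₁ | h₂ | h₃) | hS
    · exact .inl (.inl h₁)
    · rcases Sym2.eq_iff.mp h₂ with ⟨rfl, -⟩ | ⟨rfl, -⟩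
      · exact .inr (.inl hz)
      · exact .inr (.inr hz)
    · exact .inl (.inr (.inr h₃))
    · exact .inr hS

lemma exists_rotationEnds_adj {y : V} (h : RotationReachable Q₀ Q) (hxy : G.Adj x y)
    (hy : y ∈ Q.support) : ∃ z ∈ rotationEnds Q₀, Q.toSubgraph.Adj z y := by
  obtain ⟨z, q₁, hzy, q₂, rfl⟩ := exists_append_cons_eq_of_mem_support hxy.ne hy
  exact ⟨z, (h.rotate q₁ hzy q₂ hxy).start_mem_rotationEnds, by simp [Walk.toSubgraph]⟩

end RotationReachable

lemma IsPath.ncard_biUnion_neighborSet_toSubgraph_lt (hp : p.IsPath) {S : Finset V}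
    (hu : u ∈ S) :
    (⋃ s ∈ S, p.toSubgraph.neighborSet s).ncard < 2 * S.card := by
  classical
  have hS := S.card_pos.mpr ⟨u, hu⟩
  calc (⋃ s ∈ S, p.toSubgraph.neighborSet s).ncard
      ≤ ∑ s ∈ S, (p.toSubgraph.neighborSet s).ncard := S.set_ncard_biUnion_le _
    _ = (p.toSubgraph.neighborSet u).ncard +
          ∑ s ∈ S.erase u, (p.toSubgraph.neighborSet s).ncard := (S.add_sum_erase _ hu).symm
    _ ≤ 1 + (S.erase u).card • 2 :=
      add_le_add hp.ncard_neighborSet_toSubgraph_startpoint_le_one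
        (Finset.sum_le_card_nsmul _ _ _ fun s _ => hp.ncard_neighborSet_toSubgraph_le_two s)
    _ < 2 * S.card := by
      rw [Finset.card_erase_of_mem hu, smul_eq_mul]
      omega

variable {Q₀ : G.Walk c d}

theorem IsPath.neighbors_rotationEnds_subset (h₀ : Q₀.IsPath)
    (hmax : ∀ (u v : V) (Q : G.Walk u v), Q.IsPath → Q.length ≤ Q₀.length) :
    {y | ∃ x ∈ rotationEnds Q₀, G.Adj x y} \ rotationEnds Q₀ ⊆
      ⋃ s ∈ rotationEnds Q₀, Q₀.toSubgraph.neighborSet s := by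
  rintro y ⟨⟨x, ⟨Q, hQ⟩, hxy⟩, hy⟩
  simp only [Set.mem_iUnion, Subgraph.mem_neighborSet, exists_prop]
  by_contra! hy₀
  have hQp : Q.IsPath := hQ.isPath h₀
  have hyQ : y ∈ Q.support := by
    by_contra hyQ
    have := hmax _ _ _ ((cons_isPath_iff hxy.symm Q).mpr ⟨hQp, hyQ⟩)
    rw [length_cons, hQ.length_eq] at this
    omega
  obtain ⟨z, hz, hzy⟩ := hQ.exists_rotationEnds_adj hxy hyQ
  have hsub : Q₀.toSubgraph.neighborSet y ⊂ Q.toSubgraph.neighborSet y := by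
    refine Set.ssubset_iff_of_subset (fun w hw => ?_) |>.mpr
      ⟨z, hzy.symm, fun h => hy₀ z hz h.symm⟩
    rcases hQ.toSubgraph_adj hw with h | h | h
    · exact h
    · exact absurd h hy
    · exact absurd hw.symm (hy₀ w h)
  have hyc : y ≠ c := by
    rintro rfl
    exact hy RotationReachable.refl.start_mem_rotationEnds
  have := ncard_neighborSet_toSubgraph_le_of_isPath hQp h₀ (hQ.support_perm.subset hyQ) hyc
  exact this.not_gt (Set.ncard_lt_ncard hsub (finite_neighborSet_toSubgraph _))

theorem IsPath.le_ncard_rotationEnds [Finite V] {R : SimpleGraph V} {k : ℕ}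
    (hR : IsExpander R k 2) (hRG : R ≤ G) (h₀ : Q₀.IsPath)
    (hmax : ∀ (u v : V) (Q : G.Walk u v), Q.IsPath → Q.length ≤ Q₀.length) :
    k + 1 ≤ (rotationEnds Q₀).ncard := by
  set S := rotationEnds Q₀
  by_contra! hS
  have hexp : 2 * S.ncard ≤ ({y | ∃ x ∈ S, R.Adj x y} \ S).ncard := by
    exact_mod_cast hR S (by exact_mod_cast Nat.lt_succ_iff.mp hS)
  have hRG' : {y | ∃ x ∈ S, R.Adj x y} ⊆ {y | ∃ x ∈ S, G.Adj x y} :=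
    fun _ ⟨x, hx, hxy⟩ => ⟨x, hx, hRG hxy⟩
  have hsub : {y | ∃ x ∈ S, R.Adj x y} \ S ⊆
      ⋃ s ∈ S.toFinite.toFinset, Q₀.toSubgraph.neighborSet s := by
    simpa using (Set.sdiff_subset_sdiff_left hRG').trans (h₀.neighbors_rotationEnds_subset hmax)
  have hlt := h₀.ncard_biUnion_neighborSet_toSubgraph_lt
    (S.toFinite.mem_toFinset.mpr RotationReachable.refl.start_mem_rotationEnds)
  rw [← Set.ncard_eq_toFinset_card _ S.toFinite] at hlt
  exact (hexp.trans (Set.ncard_le_ncard hsub)).not_gt hlt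

theorem IsPath.le_ncard_setOf_isPath_length_eq [Finite V] {R : SimpleGraph V} {k : ℕ}
    (hR : IsExpander R k 2) (hRG : R ≤ G) {L : ℕ}
    (hmax : ∀ (u v : V) (Q : G.Walk u v), Q.IsPath → Q.length ≤ L)
    (h₀ : Q₀.IsPath) (hL : Q₀.length = L) :
    k + 1 ≤ {x | ∃ Q : G.Walk x d, Q.IsPath ∧ Q.length = L}.ncard := by
  subst hL
  exact (h₀.le_ncard_rotationEnds hR hRG hmax).trans <|
    Set.ncard_le_ncard (fun x ⟨Q, hQ⟩ => ⟨Q, hQ.isPath h₀, hQ.length_eq⟩)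

end SimpleGraph.Walk

namespace SimpleGraph

variable {V : Type*}

lemma mul_self_le_two_mul_ncard_edgeSet [Fintype V] (H : SimpleGraph V) {F : Set V} {m : ℕ}
    (hF : m ≤ F.ncard) (hdeg : ∀ v ∈ F, m ≤ (H.neighborSet v).ncard) :
    m * m ≤ 2 * H.edgeSet.ncard := by
  classical
  have hdeg' : ∀ v ∈ F.toFinset, m ≤ H.degree v := fun v hv => by
    simpa [← card_neighborSet_eq_degree, ← Nat.card_coe_set_eq] using hdeg v (by simpa using hv)
  calc m * m ≤ F.toFinset.card * m := by rw [← Set.ncard_eq_toFinset_card']; gcongr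
    _ ≤ ∑ v ∈ F.toFinset, H.degree v := by simpa using Finset.card_nsmul_le_sum _ _ _ hdeg'
    _ ≤ ∑ v, H.degree v := Finset.sum_le_univ_sum_of_nonneg fun _ => Nat.zero_le _
    _ = 2 * H.edgeSet.ncard := by
      rw [sum_degrees_eq_twice_card_edges, ← coe_edgeFinset, Set.ncard_coe_finset]

end SimpleGraph

section Boosters

variable {V : Type*} {a b : V}

lemma edges_subset_edgeSet_pathGraph (P : (⊤ : SimpleGraph V).Walk a b) :
    ∀ e ∈ P.edges, e ∈ (pathGraph P).edgeSet := fun e he => by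
  rw [pathGraph, SimpleGraph.edgeSet_fromEdgeSet]
  exact ⟨he, SimpleGraph.not_isDiag_of_mem_edgeSet _ (P.edges_subset_edgeSet he)⟩

lemma IsBooster.symm {R : SimpleGraph V} {P : (⊤ : SimpleGraph V).Walk a b} {v w : V}
    (h : IsBooster R P v w) : IsBooster R P w v :=
  let ⟨hne, Q, hQ, hlen⟩ := h
  ⟨hne.symm, Q.reverse, hQ.reverse, by rw [SimpleGraph.Walk.length_reverse, hlen]⟩

def boosterGraph (R : SimpleGraph V) (P : (⊤ : SimpleGraph V).Walk a b) : SimpleGraph V where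
  Adj := IsBooster R P
  symm := ⟨fun _ _ => IsBooster.symm⟩
  loopless := ⟨fun _ h => h.1 rfl⟩

lemma edgeSet_boosterGraph (R : SimpleGraph V) (P : (⊤ : SimpleGraph V).Walk a b) :
    (boosterGraph R P).edgeSet = {s | ∃ v w : V, s = s(v, w) ∧ IsBooster R P v w} := by
  ext s
  induction s with
  | h v w =>
    refine ⟨fun h => ⟨v, w, rfl, h⟩, fun ⟨v', w', hs, h⟩ => ?_⟩
    rcases Sym2.eq_iff.mp hs with ⟨rfl, rfl⟩ | ⟨rfl, rfl⟩
    exacts [h, h.symm]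

end Boosters

theorem posa_boosters_general {V : Type*} [Fintype V] (k : ℕ) (hk : 0 < k)
    (R : SimpleGraph V) (hR : IsExpander R (k : ℝ) 2)
    {a b : V} (P : (⊤ : SimpleGraph V).Walk a b) (hP : P.IsPath)
    (hmax : ∀ (u v : V) (Q : (pathGraph P ⊔ R).Walk u v), Q.IsPath → Q.length ≤ P.length) :
    (((k : ℝ) + 1) ^ 2 / 2) ≤
      (({s : Sym2 V | ∃ v w : V, s = s(v, w) ∧ IsBooster R P v w}.ncard : ℝ)) := by
  set G := pathGraph P ⊔ R
  have hPG : ∀ e ∈ P.edges, e ∈ G.edgeSet := fun e he =>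
    SimpleGraph.edgeSet_mono le_sup_left (edges_subset_edgeSet_pathGraph P e he)
  set F := {x | ∃ Q : G.Walk x b, Q.IsPath ∧ Q.length = P.length}
  have hF : k + 1 ≤ F.ncard := (hP.transfer hPG).le_ncard_setOf_isPath_length_eq hR le_sup_right
    hmax (P.length_transfer hPG)
  have hL : P.length ≠ 0 := by
    obtain ⟨x, ⟨Q, -, hQ⟩, hxb⟩ := Set.exists_ne_of_one_lt_ncard (by omega : 1 < F.ncard) b
    exact fun h => hxb (SimpleGraph.Walk.eq_of_length_eq_zero (hQ.trans h))
  have hdeg : ∀ x ∈ F, k + 1 ≤ ((boosterGraph R P).neighborSet x).ncard := by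
    rintro x ⟨Q, hQ, hQL⟩
    refine (hQ.reverse.le_ncard_setOf_isPath_length_eq hR le_sup_right hmax
      (by rw [Q.length_reverse, hQL])).trans (Set.ncard_le_ncard fun w ⟨Q', hQ', hQ'L⟩ => ?_)
    refine IsBooster.symm ⟨?_, Q', hQ', hQ'L⟩
    rintro rfl
    exact hL (hQ'L ▸ Q'.length_eq_zero_iff.mpr (SimpleGraph.Walk.isPath_iff_nil.mp hQ'))
  have hcount := (boosterGraph R P).mul_self_le_two_mul_ncard_edgeSet hF hdeg
  rw [edgeSet_boosterGraph] at hcount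
  rw [div_le_iff₀ two_pos, sq, mul_comm _ (2 : ℝ)]
  exact_mod_cast hcount

/-- **Lemma 2.3 (Pósa).** If `R` is a `(k,2)`-expander on an `n`-element vertex set and `P`
is a path which is a longest path in `P ∪ R`, then at least `(k+1)²/2` unordered pairs of
distinct vertices are boosters for `(P,R)`. -/
theorem posa_boosters {V : Type*} [Fintype V] [DecidableEq V] (n k : ℕ)
    (hn : 0 < n) (hk : 0 < k) (hcard : Fintype.card V = n)
    (R : SimpleGraph V) (hR : IsExpander R (k : ℝ) 2)
    {a b : V} (P : (⊤ : SimpleGraph V).Walk a b) (hP : P.IsPath)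
    (hmax : ∀ (u v : V) (Q : (pathGraph P ⊔ R).Walk u v), Q.IsPath → Q.length ≤ P.length) :
    (((k : ℝ) + 1) ^ 2 / 2) ≤
      (({s : Sym2 V | ∃ v w : V, s = s(v, w) ∧ IsBooster R P v w}.ncard : ℝ)) :=
  posa_boosters_general k hk R hR P hP hmax
end

section
/- For every sequence of edge probabilities p = p(n) ∈ [0,1] with n·p(n)/log n → ∞, every fixed γ > 0, and every function ω(n) → ∞, the random graph G = G(n,p) asymptotically almost surely satisfies all of the following: (i) every vertex has degree between (1−γ)np and (1+γ)np; (ii) every vertex set X with |X| < (np⁴)^{−1/3} spans at most 8|X| edges; (iii) every vertex set X of size t with (np⁴)^{−1/3} ≤ t ≤ n spans at most t²p·(n/t)^{1/2} edges; (iv) every pair of disjoint vertex sets X and Y with |X||Y|p ≥ ω(n)·n satisfies e(X,Y) ≥ |X||Y|p/2. -/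
open Filter

-- Probability that the binomial random graph `G(n,p)` satisfies predicate `P`.
open scoped Classical in
noncomputable def gnpProb (n : ℕ) (p : ℝ) (P : SimpleGraph (Fin n) → Prop) : ℝ :=
  ∑ G : SimpleGraph (Fin n),
    if P G then p ^ G.edgeSet.ncard * (1 - p) ^ (n.choose 2 - G.edgeSet.ncard) else 0

/-- The number of edges of `G` spanned by the vertex set `X`. -/
noncomputable def spannedEdges {n : ℕ} (G : SimpleGraph (Fin n)) (X : Set (Fin n)) : ℕ :=
  {e : Sym2 (Fin n) | e ∈ G.edgeSet ∧ ∀ v ∈ e, v ∈ X}.ncard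

/-- The number of edges of `G` with one endpoint in `X` and the other in `Y`. -/
noncomputable def crossEdges {n : ℕ} (G : SimpleGraph (Fin n)) (X Y : Set (Fin n)) : ℕ :=
  {e : Sym2 (Fin n) | e ∈ G.edgeSet ∧ ∃ x ∈ X, ∃ y ∈ Y, e = s(x, y)}.ncard

/-!
Each property fails with probability `o(1)`, by a union bound over Chernoff estimates: the
number of edges of `G(n,p)` inside a fixed set `S` of pairs has moment generating function
`(1 - p + p c)^|S|`, so Markov's inequality for `c^(edges)` bounds both of its tails.

(i) A degree is `Bin(n - 1, p)`, so it leaves `(1 ± γ) n p` with probability `exp(-Θ(np))`,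
and `np ≫ log n` beats the `n` vertices.

(ii), (iii) Sum over the vertex sets of each size `t`, with `C(n,t) ≤ exp(t (1 + log(n/t)))`.
The threshold `(np⁴)^(-1/3)` is the size at which `tp = (np)^(-1/3)`. Below it the density
`8 / (tp)` required in (ii) is far above `p`; above it the bound of (iii) is at least
`t (np)^(1/3)`. Either way a set of size `t` fails with probability `exp(-t f(np))` for some
`f → ∞`, and the geometric series over `t` tends to zero.

(iv) For fixed disjoint `X, Y` with `μ = |X||Y|p`, `e(X,Y) < μ/2` has probability at most
`exp(-μ/8) ≤ exp(-ω n / 8)`, which beats the `4^n` choices of `(X, Y)`.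
-/

open scoped Classical Finset
open Real SimpleGraph

namespace Finset

variable {α R : Type*} [DecidableEq α] [CommRing R]

theorem sum_powerset_pow_mul_pow_mul_pow_card_inter {U S : Finset α} (hSU : S ⊆ U) (p c : R) :
    ∑ A ∈ U.powerset, p ^ #A * (1 - p) ^ (#U - #A) * c ^ #(A ∩ S) =
      (1 - p + p * c) ^ #S := by
  have hprod := prod_add (fun e => if e ∈ S then p * c else p) (fun _ => 1 - p) U
  calc ∑ A ∈ U.powerset, p ^ #A * (1 - p) ^ (#U - #A) * c ^ #(A ∩ S)
      = ∑ A ∈ U.powerset,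
          (∏ e ∈ A, if e ∈ S then p * c else p) * ∏ _e ∈ U \ A, (1 - p) := by
        refine sum_congr rfl fun A hA => ?_
        rw [prod_ite, prod_const, prod_const, prod_const, filter_mem_eq_inter,
          card_sdiff_of_subset (mem_powerset.mp hA), mul_pow,
          ← card_filter_add_card_filter_not (· ∈ S) (s := A), pow_add, filter_mem_eq_inter]
        ring
    _ = ∏ e ∈ U, (if e ∈ S then 1 - p + p * c else 1) := by
        rw [← hprod]
        exact prod_congr rfl fun e _ => by split_ifs <;> ring
    _ = (1 - p + p * c) ^ #S := by
        rw [prod_ite, prod_const, prod_const_one, mul_one, filter_mem_eq_inter,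
          inter_eq_right.mpr hSU]

end Finset

namespace Sym2

variable {α : Type*} [DecidableEq α]

theorem card_image_product_of_disjoint {X Y : Finset α} (h : Disjoint X Y) :
    #((X ×ˢ Y).image (Function.uncurry Sym2.mk)) = #X * #Y := by
  rw [Finset.card_image_of_injOn, Finset.card_product]
  rintro ⟨x, y⟩ hxy ⟨x', y'⟩ hxy' heq
  simp only [Finset.coe_product, Set.mem_prod, Finset.mem_coe] at hxy hxy'
  rcases Sym2.eq_iff.mp heq with ⟨rfl, rfl⟩ | ⟨rfl, rfl⟩
  · rfl
  · exact absurd hxy.1 (Finset.disjoint_right.mp h hxy'.2)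

theorem cast_card_image_offDiag_le (X : Finset α) :
    (#(X.offDiag.image (Function.uncurry Sym2.mk)) : ℝ) ≤ #X ^ 2 / 2 := by
  rw [Sym2.card_image_offDiag, Nat.cast_choose_two]
  nlinarith [(#X).cast_nonneg (α := ℝ)]

end Sym2

namespace SimpleGraph

variable {V : Type*} [Fintype V] [DecidableEq V]

theorem edgeSet_fromEdgeSet_of_subset {A : Finset (Sym2 V)}
    (hA : A ⊆ (⊤ : SimpleGraph V).edgeFinset) :
    (fromEdgeSet (A : Set (Sym2 V))).edgeSet = A := by
  ext e
  simp only [edgeSet_fromEdgeSet, Set.mem_sdiff, Finset.mem_coe]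
  exact ⟨And.left, fun he => ⟨he, by simpa using hA he⟩⟩

theorem sum_eq_sum_powerset_edgeFinset_top {M : Type*} [AddCommMonoid M]
    (f : SimpleGraph V → M) :
    ∑ G, f G = ∑ A ∈ (⊤ : SimpleGraph V).edgeFinset.powerset, f (fromEdgeSet ↑A) := by
  refine Finset.sum_nbij' (fun G => G.edgeFinset) (fun A => fromEdgeSet ↑A)
    (fun G _ => by simpa using edgeFinset_mono (le_top (a := G))) (by simp) (fun G _ => by simp)
    (fun A hA => Finset.coe_injective <| by
      rw [coe_edgeFinset, edgeSet_fromEdgeSet_of_subset (Finset.mem_powerset.mp hA)])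
    (fun G _ => by simp)

theorem ncard_neighborSet_eq_ncard_inter (G : SimpleGraph V) (v : V) :
    (G.neighborSet v).ncard =
      (G.edgeSet ∩ ↑((⊤ : SimpleGraph V).incidenceFinset v)).ncard := by
  have hinc : G.edgeSet ∩ ↑((⊤ : SimpleGraph V).incidenceFinset v) = G.incidenceSet v := by
    ext e
    simp only [coe_incidenceFinset, incidenceSet, Set.mem_inter_iff, Set.mem_ofPred_eq]
    exact ⟨fun h => ⟨h.1, h.2.2⟩, fun h => ⟨h.1, edgeSet_mono le_top h.1, h.2⟩⟩
  rw [hinc, Set.ncard_congr' (G.incidenceSetEquivNeighborSet v)]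

theorem card_incidenceFinset_top (v : V) :
    #((⊤ : SimpleGraph V).incidenceFinset v) = Fintype.card V - 1 := by
  rw [card_incidenceFinset_eq_degree, ← complete_graph_degree]

theorem image_offDiag_subset_edgeFinset_top (X : Finset V) :
    X.offDiag.image (Function.uncurry Sym2.mk) ⊆ (⊤ : SimpleGraph V).edgeFinset := by
  intro e he
  obtain ⟨⟨x, y⟩, hxy, rfl⟩ := Finset.mem_image.mp he
  simpa using (Finset.mem_offDiag.mp hxy).2.2

theorem image_product_subset_edgeFinset_top {X Y : Finset V} (h : Disjoint X Y) :
    (X ×ˢ Y).image (Function.uncurry Sym2.mk) ⊆ (⊤ : SimpleGraph V).edgeFinset := by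
  intro e he
  obtain ⟨⟨x, y⟩, hxy, rfl⟩ := Finset.mem_image.mp he
  rw [Finset.mem_product] at hxy
  have hne : x ≠ y := fun hx => Finset.disjoint_left.mp h hxy.1 (hx ▸ hxy.2)
  simpa using hne

end SimpleGraph

section counting

variable {n : ℕ}

theorem spannedEdges_eq_ncard_inter (G : SimpleGraph (Fin n)) (X : Finset (Fin n)) :
    spannedEdges G ↑X =
      (G.edgeSet ∩ ↑(X.offDiag.image (Function.uncurry Sym2.mk))).ncard := by
  rw [spannedEdges]
  congr 1
  ext e
  refine ⟨fun ⟨he, hX⟩ => ⟨he, ?_⟩, fun ⟨he, hmem⟩ => ⟨he, ?_⟩⟩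
  · induction e with
    | h x y =>
      have hxy : G.Adj x y := he
      refine Finset.mem_image_of_mem _ (Finset.mem_offDiag.mpr ⟨?_, ?_, hxy.ne⟩) <;> simp_all
  · obtain ⟨⟨x, y⟩, hxy, rfl⟩ := Finset.mem_image.mp hmem
    rw [Finset.mem_offDiag] at hxy
    simp [hxy.1, hxy.2.1]

theorem crossEdges_eq_ncard_inter (G : SimpleGraph (Fin n)) (X Y : Finset (Fin n)) :
    crossEdges G ↑X ↑Y =
      (G.edgeSet ∩ ↑((X ×ˢ Y).image (Function.uncurry Sym2.mk))).ncard := by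
  rw [crossEdges]
  congr 1
  ext e
  refine ⟨fun ⟨he, x, hx, y, hy, hxy⟩ => ⟨he, ?_⟩, fun ⟨he, hmem⟩ => ⟨he, ?_⟩⟩
  · exact hxy ▸ Finset.mem_image_of_mem _ (Finset.mem_product.mpr ⟨hx, hy⟩)
  · obtain ⟨⟨x, y⟩, hxy, rfl⟩ := Finset.mem_image.mp hmem
    exact ⟨x, (Finset.mem_product.mp hxy).1, y, (Finset.mem_product.mp hxy).2, rfl⟩

end counting

noncomputable def gnpWeight (n : ℕ) (p : ℝ) (G : SimpleGraph (Fin n)) : ℝ :=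
  p ^ G.edgeSet.ncard * (1 - p) ^ (n.choose 2 - G.edgeSet.ncard)

section gnp

variable {n : ℕ} {p : ℝ}

theorem gnpProb_def (P : SimpleGraph (Fin n) → Prop) :
    gnpProb n p P = ∑ G, if P G then gnpWeight n p G else 0 := rfl

theorem gnpWeight_nonneg (hp : p ∈ Set.Icc (0 : ℝ) 1) (G : SimpleGraph (Fin n)) :
    0 ≤ gnpWeight n p G :=
  mul_nonneg (pow_nonneg hp.1 _) (pow_nonneg (sub_nonneg.mpr hp.2) _)

theorem sum_gnpWeight_mul_pow_ncard_inter {S : Finset (Sym2 (Fin n))}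
    (hS : S ⊆ (⊤ : SimpleGraph (Fin n)).edgeFinset) (c : ℝ) :
    ∑ G, gnpWeight n p G * c ^ (G.edgeSet ∩ S).ncard = (1 - p + p * c) ^ #S := by
  rw [sum_eq_sum_powerset_edgeFinset_top,
    ← Finset.sum_powerset_pow_mul_pow_mul_pow_card_inter hS,
    card_edgeFinset_top_eq_card_choose_two, Fintype.card_fin]
  refine Finset.sum_congr rfl fun A hA => ?_
  rw [gnpWeight, edgeSet_fromEdgeSet_of_subset (Finset.mem_powerset.mp hA), ← Finset.coe_inter,
    Set.ncard_coe_finset, Set.ncard_coe_finset]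

theorem sum_gnpWeight : ∑ G, gnpWeight n p G = 1 := by
  simpa using sum_gnpWeight_mul_pow_ncard_inter (p := p) (Finset.empty_subset _) 1

theorem gnpProb_nonneg (hp : p ∈ Set.Icc (0 : ℝ) 1) (P : SimpleGraph (Fin n) → Prop) :
    0 ≤ gnpProb n p P :=
  Finset.sum_nonneg fun G _ => ite_nonneg (gnpWeight_nonneg hp G) le_rfl

theorem gnpProb_eq_zero_of_forall_not {P : SimpleGraph (Fin n) → Prop} (h : ∀ G, ¬ P G) :
    gnpProb n p P = 0 :=
  Finset.sum_eq_zero fun G _ => if_neg (h G)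

theorem gnpProb_mono (hp : p ∈ Set.Icc (0 : ℝ) 1) {P Q : SimpleGraph (Fin n) → Prop}
    (h : ∀ G, P G → Q G) : gnpProb n p P ≤ gnpProb n p Q :=
  Finset.sum_le_sum fun G _ => by
    by_cases hP : P G
    · rw [if_pos hP, if_pos (h G hP)]
    · rw [if_neg hP]
      exact ite_nonneg (gnpWeight_nonneg hp G) le_rfl

theorem gnpProb_not (P : SimpleGraph (Fin n) → Prop) :
    gnpProb n p (fun G => ¬ P G) = 1 - gnpProb n p P := by
  rw [← sum_gnpWeight (p := p), gnpProb_def, gnpProb_def, ← Finset.sum_sub_distrib]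
  exact Finset.sum_congr rfl fun G _ => by by_cases hP : P G <;> simp [hP]

theorem gnpProb_exists_le_sum (hp : p ∈ Set.Icc (0 : ℝ) 1) {ι : Type*} [Fintype ι]
    (E : ι → SimpleGraph (Fin n) → Prop) :
    gnpProb n p (fun G => ∃ i, E i G) ≤ ∑ i, gnpProb n p (E i) := by
  simp only [gnpProb_def]
  rw [Finset.sum_comm]
  refine Finset.sum_le_sum fun G _ => ?_
  have hterm : ∀ i, 0 ≤ if E i G then gnpWeight n p G else 0 := fun i =>
    ite_nonneg (gnpWeight_nonneg hp G) le_rfl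
  split_ifs with h
  · obtain ⟨i, hi⟩ := h
    simpa [hi] using Finset.single_le_sum (fun j _ => hterm j) (Finset.mem_univ i)
  · exact Finset.sum_nonneg fun i _ => hterm i

theorem gnpProb_or_le (hp : p ∈ Set.Icc (0 : ℝ) 1) (P Q : SimpleGraph (Fin n) → Prop) :
    gnpProb n p (fun G => P G ∨ Q G) ≤ gnpProb n p P + gnpProb n p Q := by
  simp only [gnpProb_def, ← Finset.sum_add_distrib]
  refine Finset.sum_le_sum fun G _ => ?_
  by_cases hP : P G <;> by_cases hQ : Q G <;> simp [hP, hQ, gnpWeight_nonneg hp G]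

end gnp

section chernoff

variable {n : ℕ} {p : ℝ} {S : Finset (Sym2 (Fin n))}

theorem gnpProb_le_exp_mul_pow (hp : p ∈ Set.Icc (0 : ℝ) 1)
    (hS : S ⊆ (⊤ : SimpleGraph (Fin n)).edgeFinset) {c : ℝ} (hc : 0 < c) (a : ℝ)
    {P : SimpleGraph (Fin n) → Prop}
    (hP : ∀ G, P G → a * log c ≤ (G.edgeSet ∩ S).ncard * log c) :
    gnpProb n p P ≤ exp (-(a * log c)) * (1 - p + p * c) ^ #S := by
  rw [← sum_gnpWeight_mul_pow_ncard_inter hS, Finset.mul_sum, gnpProb_def]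
  refine Finset.sum_le_sum fun G _ => ?_
  have hw := gnpWeight_nonneg hp G
  have hpow : c ^ (G.edgeSet ∩ S).ncard = exp ((G.edgeSet ∩ S).ncard * log c) := by
    rw [← rpow_natCast, rpow_def_of_pos hc, mul_comm]
  split_ifs with hG
  · calc gnpWeight n p G
        ≤ gnpWeight n p G * exp ((G.edgeSet ∩ S).ncard * log c - a * log c) :=
          le_mul_of_one_le_right hw (one_le_exp (by linarith [hP G hG]))
      _ = _ := by rw [sub_eq_neg_add, exp_add, hpow]; ring
  · positivity

theorem exp_neg_mul_pow_le (hp : p ∈ Set.Icc (0 : ℝ) 1) {c : ℝ} (hc : 0 ≤ c) (x : ℝ)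
    (m : ℕ) : exp (-x) * (1 - p + p * c) ^ m ≤ exp (-x + p * (c - 1) * m) := by
  have hbase : 1 - p + p * c ≤ exp (p * (c - 1)) := by linarith [add_one_le_exp (p * (c - 1))]
  calc exp (-x) * (1 - p + p * c) ^ m ≤ exp (-x) * exp (p * (c - 1)) ^ m := by
        gcongr
        nlinarith [hp.1, hp.2]
    _ = exp (-x + p * (c - 1) * m) := by rw [← exp_nat_mul, ← exp_add]; ring_nf

theorem gnpProb_upper_tail_le (hp : p ∈ Set.Icc (0 : ℝ) 1)
    (hS : S ⊆ (⊤ : SimpleGraph (Fin n)).edgeFinset) {c : ℝ} (hc : 1 ≤ c) (a : ℝ) :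
    gnpProb n p (fun G => a ≤ (G.edgeSet ∩ S).ncard) ≤
      exp (-(a * log c) + p * (c - 1) * #S) :=
  (gnpProb_le_exp_mul_pow hp hS (by linarith) a fun _ hG =>
    mul_le_mul_of_nonneg_right hG (log_nonneg hc)).trans
      (exp_neg_mul_pow_le hp (by linarith) _ _)

theorem gnpProb_lower_tail_le (hp : p ∈ Set.Icc (0 : ℝ) 1)
    (hS : S ⊆ (⊤ : SimpleGraph (Fin n)).edgeFinset) {c : ℝ} (hc₀ : 0 < c) (hc₁ : c ≤ 1)
    (a : ℝ) :
    gnpProb n p (fun G => (G.edgeSet ∩ S).ncard ≤ a) ≤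
      exp (-(a * log c) + p * (c - 1) * #S) :=
  (gnpProb_le_exp_mul_pow hp hS hc₀ a fun _ hG =>
    mul_le_mul_of_nonpos_right hG (log_nonpos hc₀.le hc₁)).trans
      (exp_neg_mul_pow_le hp hc₀.le _ _)

end chernoff

theorem Nat.cast_choose_le_exp {n t : ℕ} (hn : 0 < n) (ht : 0 < t) :
    (n.choose t : ℝ) ≤ Real.exp (t * (1 + Real.log (n / t))) := by
  have ht' : (0 : ℝ) < t := by exact_mod_cast ht
  have hnt : (0 : ℝ) < n / t := by positivity
  calc (n.choose t : ℝ) ≤ (n : ℝ) ^ t / t.factorial := Nat.choose_le_pow_div t n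
    _ = ((n : ℝ) / t) ^ t * ((t : ℝ) ^ t / t.factorial) := by rw [div_pow]; field_simp
    _ ≤ Real.exp (t * Real.log (n / t)) * Real.exp t := by
        rw [← rpow_natCast, rpow_def_of_pos hnt, mul_comm (Real.log _)]
        gcongr
        exact Real.pow_div_factorial_le_exp _ ht'.le t
    _ = Real.exp (t * (1 + Real.log (n / t))) := by rw [← Real.exp_add]; ring_nf

theorem sum_range_ite_exp_le {D : ℝ} (hD : 1 ≤ D) (n : ℕ) :
    ∑ t ∈ Finset.range (n + 1), (if t = 0 then 0 else exp (-(D * t))) ≤ 2 * exp (-D) := by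
  set r := exp (-D)
  have hr₀ : 0 ≤ r := (exp_pos _).le
  have hr : r ≤ 1 / 2 := by
    have h2 : 2 ≤ exp 1 := by linarith [add_one_le_exp 1]
    calc r ≤ exp (-1) := exp_le_exp.mpr (by linarith)
      _ = (exp 1)⁻¹ := exp_neg 1
      _ ≤ 1 / 2 := by rw [one_div]; exact inv_anti₀ (by norm_num) h2
  have hgeom : ∑ t ∈ Finset.range n, r ^ t ≤ 1 / (1 - r) := by
    simpa using geom_sum_Ico_le_of_lt_one (m := 0) (n := n) hr₀ (by linarith)
  have hshift : ∑ t ∈ Finset.range (n + 1), (if t = 0 then 0 else exp (-(D * t))) =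
      r * ∑ t ∈ Finset.range n, r ^ t := by
    rw [Finset.sum_range_succ', if_pos rfl, add_zero, Finset.mul_sum]
    refine Finset.sum_congr rfl fun t _ => ?_
    rw [if_neg t.succ_ne_zero, ← pow_succ', ← exp_nat_mul]
    push_cast
    ring_nf
  calc _ = r * ∑ t ∈ Finset.range n, r ^ t := hshift
    _ ≤ r * (1 / (1 - r)) := by gcongr
    _ ≤ 2 * r := by
        rw [mul_one_div, div_le_iff₀ (by linarith)]
        nlinarith

theorem rpow_neg_third_eq {n p : ℝ} (hn : 0 < n) (hp : 0 < p) :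
    (n * p ^ 4) ^ (-(1 / 3) : ℝ) = exp (-(log (n * p) / 3)) / p := by
  have hmul := exp_add ((log n + 4 * log p) * -(1 / 3)) (log p)
  rw [exp_log hp] at hmul
  rw [rpow_def_of_pos (by positivity), eq_div_iff hp.ne', log_mul hn.ne' (by positivity),
    log_pow, log_mul hn.ne' hp.ne']
  push_cast
  rw [← hmul]
  ring_nf

theorem mul_exp_log_div_three_le {n p t : ℝ} (hn : 0 < n) (hp : 0 < p) (ht : 0 < t)
    (hB : (n * p ^ 4) ^ (-(1 / 3) : ℝ) ≤ t) :
    t * exp (log (n * p) / 3) ≤ t ^ 2 * p * √(n / t) := by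
  rw [rpow_neg_third_eq hn hp, div_le_iff₀ hp] at hB
  have hsq : exp (log (n * p) / 3) ^ 2 ≤ t * p * (n * p) := by
    calc exp (log (n * p) / 3) ^ 2 = exp (log (n * p)) * exp (-(log (n * p) / 3)) := by
          rw [← exp_add, sq, ← exp_add]; ring_nf
      _ ≤ (n * p) * (t * p) := by rw [exp_log (by positivity)]; gcongr
      _ = t * p * (n * p) := by ring
  have hrw : t ^ 2 * p * √(n / t) = t * √(t * p * (n * p)) := by
    rw [show t * p * (n * p) = (t * p) ^ 2 * (n / t) by field_simp, sqrt_mul (by positivity),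
      sqrt_sq (by positivity)]
    ring
  rw [hrw]
  gcongr
  exact le_sqrt_of_sq_le hsq

theorem log_div_ten_le_log_sub_one_add_inv {x : ℝ} (hx : 2 ≤ x) :
    log x / 10 ≤ log x - 1 + x⁻¹ := by
  have hhalf : 1 - 2 / x ≤ log (x / 2) := by
    simpa using one_sub_inv_le_log_of_pos (show 0 < x / 2 by linarith)
  rw [log_div (by linarith) (by norm_num)] at hhalf
  have hinv : x⁻¹ ≤ 1 / 2 := by rw [inv_le_comm₀ (by linarith) (by norm_num)]; linarith
  have : 2 / x = 2 * x⁻¹ := by ring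
  linarith [log_two_gt_d9]

theorem InformationTheory.klFun_pos {x : ℝ} (hx : 0 ≤ x) (hx₁ : x ≠ 1) : 0 < klFun x :=
  (klFun_nonneg hx).lt_of_ne (Ne.symm ((klFun_eq_zero_iff hx).not.mpr hx₁))

section failure

open InformationTheory

variable {n : ℕ} {p : ℝ}

theorem gnpProb_exists_finset_le (hp : p ∈ Set.Icc (0 : ℝ) 1) {D : ℝ} (hD : 1 ≤ D)
    {E : Finset (Fin n) → SimpleGraph (Fin n) → Prop} (hE₀ : ∀ G, ¬ E ∅ G)
    (hE : ∀ X : Finset (Fin n), X.Nonempty →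
      n.choose #X * gnpProb n p (E X) ≤ exp (-(D * #X))) :
    gnpProb n p (fun G => ∃ X, E X G) ≤ 2 * exp (-D) := by
  set g : ℕ → ℝ := fun t => if t = 0 then 0 else exp (-(D * t)) / n.choose t
  have hEg : ∀ X, gnpProb n p (E X) ≤ g #X := by
    intro X
    rcases X.eq_empty_or_nonempty with rfl | hX
    · simp [g, gnpProb_eq_zero_of_forall_not hE₀]
    · have hchoose : (0 : ℝ) < n.choose #X := by
        exact_mod_cast Nat.choose_pos (by simpa using X.card_le_univ)
      simp only [g, if_neg hX.card_pos.ne']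
      rw [le_div_iff₀ hchoose, mul_comm]
      exact hE X hX
  calc gnpProb n p (fun G => ∃ X, E X G)
      ≤ ∑ X, gnpProb n p (E X) := gnpProb_exists_le_sum hp E
    _ ≤ ∑ X : Finset (Fin n), g #X := Finset.sum_le_sum fun X _ => hEg X
    _ = ∑ t ∈ Finset.range (n + 1), (if t = 0 then 0 else exp (-(D * t))) := by
        rw [← Finset.powerset_univ, Finset.sum_powerset_apply_card, Finset.card_univ,
          Fintype.card_fin]
        refine Finset.sum_congr rfl fun t ht => ?_
        have hchoose : (n.choose t : ℝ) ≠ 0 := by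
          exact_mod_cast (Nat.choose_pos (Nat.lt_succ_iff.mp (Finset.mem_range.mp ht))).ne'
        simp only [g, nsmul_eq_mul]
        split_ifs
        · rw [mul_zero]
        · field_simp
    _ ≤ 2 * exp (-D) := sum_range_ite_exp_le hD n

theorem gnpProb_degree_far_le (hp : p ∈ Set.Icc (0 : ℝ) 1) {γ : ℝ} (hγ₀ : 0 < γ)
    (hγ₁ : γ < 1) (v : Fin n) :
    gnpProb n p (fun G => ¬ ((1 - γ) * n * p ≤ ((G.neighborSet v).ncard : ℝ) ∧
        ((G.neighborSet v).ncard : ℝ) ≤ (1 + γ) * n * p))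
      ≤ 2 * exp (1 - min (klFun (1 + γ)) (klFun (1 - γ)) * (n * p)) := by
  set κ := min (klFun (1 + γ)) (klFun (1 - γ))
  have hnp : 0 ≤ (n : ℝ) * p := mul_nonneg n.cast_nonneg hp.1
  set S := (⊤ : SimpleGraph (Fin n)).incidenceFinset v
  have hS : S ⊆ (⊤ : SimpleGraph (Fin n)).edgeFinset := incidenceFinset_subset _ v
  -- `v` has `n - 1` potential neighbours, not `n`: the `1 +` in the exponent absorbs that.
  have hcard : (#S : ℝ) = n - 1 := by
    rw [card_incidenceFinset_top, Fintype.card_fin, Nat.cast_pred v.pos]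
  have hupper : gnpProb n p (fun G => (1 + γ) * n * p ≤ (G.edgeSet ∩ S).ncard)
      ≤ exp (1 - κ * (n * p)) := by
    refine (gnpProb_upper_tail_le hp hS (c := 1 + γ) (by linarith) _).trans
      (exp_le_exp.mpr ?_)
    have hκ : κ * (n * p) ≤ ((1 + γ) * log (1 + γ) + 1 - (1 + γ)) * (n * p) :=
      mul_le_mul_of_nonneg_right (min_le_left _ _) hnp
    rw [hcard]
    nlinarith [hp.1, hp.2]
  have hlower : gnpProb n p (fun G => ((G.edgeSet ∩ S).ncard : ℝ) ≤ (1 - γ) * n * p)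
      ≤ exp (1 - κ * (n * p)) := by
    refine (gnpProb_lower_tail_le hp hS (c := 1 - γ) (by linarith) (by linarith) _).trans
      (exp_le_exp.mpr ?_)
    have hκ : κ * (n * p) ≤ ((1 - γ) * log (1 - γ) + 1 - (1 - γ)) * (n * p) :=
      mul_le_mul_of_nonneg_right (min_le_right _ _) hnp
    rw [hcard]
    nlinarith [hp.1, hp.2]
  calc _ ≤ gnpProb n p (fun G => (1 + γ) * n * p ≤ (G.edgeSet ∩ S).ncard ∨
          ((G.edgeSet ∩ S).ncard : ℝ) ≤ (1 - γ) * n * p) := by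
        refine gnpProb_mono hp fun G hG => ?_
        rw [ncard_neighborSet_eq_ncard_inter] at hG
        by_contra! h
        exact hG ⟨h.2.le, h.1.le⟩
    _ ≤ _ := gnpProb_or_le hp _ _
    _ ≤ 2 * exp (1 - κ * (n * p)) := by linarith

theorem gnpProb_exists_degree_far_le (hp : p ∈ Set.Icc (0 : ℝ) 1) {γ : ℝ} (hγ₀ : 0 < γ)
    (hγ₁ : γ < 1) :
    gnpProb n p (fun G => ∃ v, ¬ ((1 - γ) * n * p ≤ ((G.neighborSet v).ncard : ℝ) ∧
        ((G.neighborSet v).ncard : ℝ) ≤ (1 + γ) * n * p))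
      ≤ 2 * n * exp (1 - min (klFun (1 + γ)) (klFun (1 - γ)) * (n * p)) :=
  (gnpProb_exists_le_sum hp _).trans <|
    (Finset.sum_le_sum fun v _ => gnpProb_degree_far_le hp hγ₀ hγ₁ v).trans_eq (by simp; ring)

theorem gnpProb_eight_mul_lt_spannedEdges_le (hp : p ∈ Set.Icc (0 : ℝ) 1) (hp₀ : 0 < p)
    {X : Finset (Fin n)} (hX : X.Nonempty) (hXp : #X * p ≤ 8) :
    gnpProb n p (fun G => 8 * #X < (spannedEdges G X : ℝ)) ≤
      exp (-(8 * #X * log (8 / (#X * p))) + 4 * #X) := by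
  have ht : (0 : ℝ) < #X := by exact_mod_cast hX.card_pos
  have hc : 1 ≤ 8 / (#X * p) := by rw [le_div_iff₀ (by positivity)]; linarith
  refine (gnpProb_mono hp fun G hG => ?_).trans
    ((gnpProb_upper_tail_le hp (image_offDiag_subset_edgeFinset_top X) hc (8 * #X)).trans
      (exp_le_exp.mpr ?_))
  · rw [← spannedEdges_eq_ncard_inter]
    exact hG.le
  · have hpc : p * (8 / (#X * p)) * #X = 8 := by field_simp
    have hpc₁ : 0 ≤ p * (8 / (#X * p) - 1) := mul_nonneg hp.1 (by linarith)
    have hS := mul_le_mul_of_nonneg_left (Sym2.cast_card_image_offDiag_le X) hpc₁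
    nlinarith

theorem gnpProb_exists_small_dense_le (hp : p ∈ Set.Icc (0 : ℝ) 1) (hp₀ : 0 < p)
    (hL : 3 ≤ log (n * p)) :
    gnpProb n p (fun G => ∃ X : Finset (Fin n), (#X : ℝ) < (n * p ^ 4) ^ (-(1 / 3) : ℝ) ∧
        8 * #X < (spannedEdges G X : ℝ)) ≤ 2 * exp (-(log (n * p) / 3)) := by
  set L := log (n * p)
  have hn : (0 : ℝ) < n := by
    rcases n.eq_zero_or_pos with rfl | hn
    · simp [L] at hL; linarith
    · exact_mod_cast hn
  refine gnpProb_exists_finset_le hp (by linarith) (fun G hG => ?_) fun X hX => ?_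
  · have h := hG.2
    rw [spannedEdges_eq_ncard_inter] at h
    simp at h
  set t := #X
  by_cases hXB : (t : ℝ) < (n * p ^ 4) ^ (-(1 / 3) : ℝ)
  swap
  · rw [gnpProb_eq_zero_of_forall_not fun G hG => hXB hG.1, mul_zero]
    exact (exp_pos _).le
  have ht : (0 : ℝ) < t := by exact_mod_cast hX.card_pos
  rw [rpow_neg_third_eq hn hp₀, lt_div_iff₀ hp₀] at hXB
  have htp : log (t * p) < -(L / 3) := (log_lt_iff_lt_exp (by positivity)).mpr hXB
  have hLnp : L = log n + log p := log_mul hn.ne' hp₀.ne'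
  have hlog : log (n / t) = L - log (t * p) := by
    rw [log_div (by positivity) ht.ne', log_mul ht.ne' hp₀.ne', hLnp]
    ring
  have hlog8 : log (8 / (t * p)) = 3 * log 2 - log (t * p) := by
    rw [log_div (by norm_num) (by positivity), show (8 : ℝ) = 2 ^ 3 by norm_num, log_pow]
    push_cast
    ring
  calc (n.choose t : ℝ) * gnpProb n p _
      ≤ exp (t * (1 + log (n / t))) * exp (-(8 * t * log (8 / (t * p))) + 4 * t) :=
        mul_le_mul (Nat.cast_choose_le_exp (by exact_mod_cast hn) hX.card_pos)
          ((gnpProb_mono hp fun G hG => hG.2).trans (gnpProb_eight_mul_lt_spannedEdges_le hp hp₀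
            hX (by linarith [exp_le_one_iff.mpr (show -(L / 3) ≤ 0 by linarith)])))
          (gnpProb_nonneg hp _) (exp_pos _).le
    _ ≤ exp (-(L / 3 * t)) := by
        rw [← exp_add, exp_le_exp, hlog, hlog8]
        have key : 1 + (L - log (t * p)) - 8 * (3 * log 2 - log (t * p)) + 4 ≤ -(L / 3) := by
          linarith [log_two_gt_d9]
        nlinarith [mul_le_mul_of_nonneg_left key ht.le]

theorem gnpProb_lt_spannedEdges_le (hp : p ∈ Set.Icc (0 : ℝ) 1) {X : Finset (Fin n)}
    (hX : X.Nonempty) :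
    gnpProb n p (fun G => (#X : ℝ) ^ 2 * p * √(n / #X) < spannedEdges G X) ≤
      exp (-((#X : ℝ) ^ 2 * p * √(n / #X) * log (2 * √(n / #X)) / 10)) := by
  have ht : (0 : ℝ) < #X := by exact_mod_cast hX.card_pos
  have htn : (#X : ℝ) ≤ n := by exact_mod_cast (by simpa using X.card_le_univ : #X ≤ n)
  set q := √(n / #X)
  -- With `c = 2 q` the threshold `s` is `c` times `p t² / 2 ≥ p C(t, 2)`.
  set c := 2 * q
  set s := (#X : ℝ) ^ 2 * p * q
  have hq : 1 ≤ q := one_le_sqrt.mpr ((one_le_div ht).mpr htn)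
  refine (gnpProb_mono hp fun G hG => ?_).trans
    ((gnpProb_upper_tail_le hp (image_offDiag_subset_edgeFinset_top X) (c := c)
      (by linarith) s).trans (exp_le_exp.mpr ?_))
  · rw [← spannedEdges_eq_ncard_inter]
    exact hG.le
  · have hs : 0 ≤ s := mul_nonneg (mul_nonneg (sq_nonneg _) hp.1) (sqrt_nonneg _)
    have hφ := mul_le_mul_of_nonneg_left
      (log_div_ten_le_log_sub_one_add_inv (show 2 ≤ c by linarith)) hs
    have hpc₁ : 0 ≤ p * (c - 1) := mul_nonneg hp.1 (by linarith)
    have hS := mul_le_mul_of_nonneg_left (Sym2.cast_card_image_offDiag_le X) hpc₁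
    have hsc : s * c⁻¹ = p * #X ^ 2 / 2 := by simp only [s, c]; field_simp
    nlinarith

theorem gnpProb_exists_large_dense_le (hp : p ∈ Set.Icc (0 : ℝ) 1) (hp₀ : 0 < p)
    (hR : 40 ≤ exp (log (n * p) / 3)) :
    gnpProb n p (fun G => ∃ X : Finset (Fin n), (n * p ^ 4) ^ (-(1 / 3) : ℝ) ≤ (#X : ℝ) ∧
        (#X : ℝ) ^ 2 * p * √(n / #X) < spannedEdges G X)
      ≤ 2 * exp (-(exp (log (n * p) / 3) / 40)) := by
  set R := exp (log (n * p) / 3)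
  have hn : (0 : ℝ) < n := by
    rcases n.eq_zero_or_pos with rfl | hn
    · norm_num [R] at hR
    · exact_mod_cast hn
  have hB : 0 < (n * p ^ 4) ^ (-(1 / 3) : ℝ) := by positivity
  refine gnpProb_exists_finset_le hp (by linarith) (fun G hG => by simp at hG; linarith)
    fun X hX => ?_
  set t := #X
  by_cases hXB : (n * p ^ 4) ^ (-(1 / 3) : ℝ) ≤ (t : ℝ)
  swap
  · rw [gnpProb_eq_zero_of_forall_not fun G hG => hXB hG.1, mul_zero]
    exact (exp_pos _).le
  have ht : (0 : ℝ) < t := by exact_mod_cast hX.card_pos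
  have htn : (t : ℝ) ≤ n := by exact_mod_cast (by simpa using X.card_le_univ : t ≤ n)
  set z := log (n / t)
  have hz : 0 ≤ z := log_nonneg ((one_le_div ht).mpr htn)
  have hlogc : log (2 * √(n / t)) = log 2 + z / 2 := by
    rw [log_mul two_ne_zero (by positivity), log_sqrt (by positivity)]
  have hs := mul_exp_log_div_three_le hn hp₀ ht hXB
  calc (n.choose t : ℝ) * gnpProb n p _
      ≤ exp (t * (1 + z)) * exp (-((t : ℝ) ^ 2 * p * √(n / t) * log (2 * √(n / t)) / 10)) :=
        mul_le_mul (Nat.cast_choose_le_exp (by exact_mod_cast hn) hX.card_pos)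
          ((gnpProb_mono hp fun G hG => hG.2).trans (gnpProb_lt_spannedEdges_le hp hX))
          (gnpProb_nonneg hp _) (exp_pos _).le
    _ ≤ exp (-(R / 40 * t)) := by
        rw [← exp_add, exp_le_exp, hlogc]
        have hlogc₀ : 0 ≤ log 2 + z / 2 := by positivity
        have key : 1 + z + R / 40 ≤ R * (log 2 + z / 2) / 10 := by
          nlinarith [log_two_gt_d9, mul_le_mul_of_nonneg_right hR hz]
        nlinarith [mul_le_mul_of_nonneg_right hs hlogc₀, mul_le_mul_of_nonneg_left key ht.le]

theorem gnpProb_crossEdges_lt_le (hp : p ∈ Set.Icc (0 : ℝ) 1) {X Y : Finset (Fin n)}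
    (h : Disjoint X Y) :
    gnpProb n p (fun G => (crossEdges G X Y : ℝ) < #X * #Y * p / 2) ≤
      exp (-(#X * #Y * p / 8)) := by
  set S := (X ×ˢ Y).image (Function.uncurry Sym2.mk)
  have hcard : (#S : ℝ) = #X * #Y := by
    rw [Sym2.card_image_product_of_disjoint h, Nat.cast_mul]
  have hμ : 0 ≤ (#X : ℝ) * #Y * p := mul_nonneg (by positivity) hp.1
  calc _ ≤ gnpProb n p (fun G => ((G.edgeSet ∩ S).ncard : ℝ) ≤ #X * #Y * p / 2) :=
        gnpProb_mono hp fun G hG => by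
          rw [← crossEdges_eq_ncard_inter]
          exact hG.le
    _ ≤ _ := gnpProb_lower_tail_le hp (image_product_subset_edgeFinset_top h)
          (c := 1 / 2) (by norm_num) (by norm_num) _
    _ ≤ exp (-(#X * #Y * p / 8)) := by
        rw [exp_le_exp, hcard, one_div, log_inv]
        nlinarith [mul_le_mul_of_nonneg_left log_two_lt_d9.le hμ]

theorem gnpProb_exists_sparse_cut_le (hp : p ∈ Set.Icc (0 : ℝ) 1) {w : ℝ} :
    gnpProb n p (fun G => ∃ X Y : Finset (Fin n), Disjoint X Y ∧ w * n ≤ #X * #Y * p ∧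
        (crossEdges G X Y : ℝ) < #X * #Y * p / 2) ≤ 4 ^ n * exp (-(w * n / 8)) := by
  have hpair : ∀ XY : Finset (Fin n) × Finset (Fin n), gnpProb n p (fun G =>
      Disjoint XY.1 XY.2 ∧ w * n ≤ #XY.1 * #XY.2 * p ∧
        (crossEdges G XY.1 XY.2 : ℝ) < #XY.1 * #XY.2 * p / 2) ≤ exp (-(w * n / 8)) := by
    rintro ⟨X, Y⟩
    by_cases h : Disjoint X Y ∧ w * n ≤ #X * #Y * p
    · exact ((gnpProb_mono hp fun G hG => hG.2.2).trans (gnpProb_crossEdges_lt_le hp h.1)).trans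
        (exp_le_exp.mpr (by linarith [h.2]))
    · rw [gnpProb_eq_zero_of_forall_not fun G hG => h ⟨hG.1, hG.2.1⟩]
      exact (exp_pos _).le
  calc _ ≤ ∑ XY : Finset (Fin n) × Finset (Fin n), gnpProb n p (fun G =>
          Disjoint XY.1 XY.2 ∧ w * n ≤ #XY.1 * #XY.2 * p ∧
            (crossEdges G XY.1 XY.2 : ℝ) < #XY.1 * #XY.2 * p / 2) :=
        (gnpProb_mono hp fun G ⟨X, Y, hXY⟩ => ⟨(X, Y), hXY⟩).trans
          (gnpProb_exists_le_sum hp _)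
    _ ≤ ∑ _XY : Finset (Fin n) × Finset (Fin n), exp (-(w * n / 8)) :=
        Finset.sum_le_sum fun XY _ => hpair XY
    _ = 4 ^ n * exp (-(w * n / 8)) := by
        rw [Finset.sum_const, Finset.card_univ, Fintype.card_prod, Fintype.card_finset,
          Fintype.card_fin, nsmul_eq_mul, ← mul_pow]
        norm_num

end failure

section asymptotic

open Topology InformationTheory

variable {p : ℕ → ℝ}

theorem tendsto_gnpProb_of_not_le (hp : ∀ n, p n ∈ Set.Icc (0 : ℝ) 1)
    {P : ∀ n, SimpleGraph (Fin n) → Prop} {f : ℕ → ℝ} (hf : Tendsto f atTop (𝓝 0))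
    (hle : ∀ᶠ n in atTop, gnpProb n (p n) (fun G => ¬ P n G) ≤ f n) :
    Tendsto (fun n => gnpProb n (p n) (P n)) atTop (𝓝 1) := by
  have hnot : Tendsto (fun n => gnpProb n (p n) (fun G => ¬ P n G)) atTop (𝓝 0) :=
    tendsto_of_tendsto_of_tendsto_of_le_of_le' tendsto_const_nhds hf
      (Eventually.of_forall fun n => gnpProb_nonneg (hp n) _) hle
  simpa [gnpProb_not] using (tendsto_const_nhds (x := (1 : ℝ))).sub hnot

theorem Filter.Tendsto.gnpProb_and (hp : ∀ n, p n ∈ Set.Icc (0 : ℝ) 1)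
    {P Q : ∀ n, SimpleGraph (Fin n) → Prop}
    (hP : Tendsto (fun n => gnpProb n (p n) (P n)) atTop (𝓝 1))
    (hQ : Tendsto (fun n => gnpProb n (p n) (Q n)) atTop (𝓝 1)) :
    Tendsto (fun n => gnpProb n (p n) (fun G => P n G ∧ Q n G)) atTop (𝓝 1) := by
  refine tendsto_gnpProb_of_not_le hp
    (f := fun n => (1 - gnpProb n (p n) (P n)) + (1 - gnpProb n (p n) (Q n))) ?_
    (Eventually.of_forall fun n => ?_)
  · simpa using ((tendsto_const_nhds (x := (1 : ℝ))).sub hP).add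
      ((tendsto_const_nhds (x := (1 : ℝ))).sub hQ)
  · rw [← gnpProb_not, ← gnpProb_not]
    exact (gnpProb_mono (hp n) fun G hG => not_and_or.mp hG).trans (gnpProb_or_le (hp n) _ _)

theorem tendsto_natCast_mul_of_div_log
    (hgrowth : Tendsto (fun n : ℕ => (n : ℝ) * p n / log n) atTop atTop) :
    Tendsto (fun n : ℕ => (n : ℝ) * p n) atTop atTop := by
  refine (hgrowth.atTop_mul_atTop₀ (tendsto_log_atTop.comp tendsto_natCast_atTop_atTop)).congr' ?_
  filter_upwards [eventually_ge_atTop 2] with n hn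
  have : log n ≠ 0 := (log_pos (by exact_mod_cast hn)).ne'
  field_simp
  rfl

theorem tendsto_natCast_mul_exp_neg_mul
    (hgrowth : Tendsto (fun n : ℕ => (n : ℝ) * p n / log n) atTop atTop) {κ : ℝ}
    (hκ : 0 < κ) :
    Tendsto (fun n : ℕ => (n : ℝ) * exp (-(κ * (n * p n)))) atTop (𝓝 0) := by
  refine tendsto_of_tendsto_of_tendsto_of_le_of_le' tendsto_const_nhds
    tendsto_inv_atTop_nhds_zero_nat (Eventually.of_forall fun n => by positivity) ?_
  filter_upwards [eventually_ge_atTop 2, hgrowth.eventually_ge_atTop (2 / κ)] with n hn hgr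
  have hn₀ : (0 : ℝ) < n := by positivity
  have hlog : 0 < log n := log_pos (by exact_mod_cast hn)
  have hexp : 2 * log n ≤ κ * (n * p n) := by
    rw [le_div_iff₀ hlog, div_mul_eq_mul_div, div_le_iff₀ hκ] at hgr
    linarith
  calc (n : ℝ) * exp (-(κ * (n * p n))) ≤ n * exp (-(2 * log n)) := by gcongr
    _ = (n : ℝ)⁻¹ := by
        rw [exp_neg, two_mul, exp_add, exp_log hn₀]
        field_simp

theorem tendsto_gnpProb_degrees (hp : ∀ n, p n ∈ Set.Icc (0 : ℝ) 1)
    (hgrowth : Tendsto (fun n : ℕ => (n : ℝ) * p n / log n) atTop atTop) {γ : ℝ}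
    (hγ : 0 < γ) :
    Tendsto (fun n : ℕ => gnpProb n (p n) (fun G =>
      ∀ v : Fin n, (1 - γ) * n * p n ≤ ((G.neighborSet v).ncard : ℝ) ∧
        ((G.neighborSet v).ncard : ℝ) ≤ (1 + γ) * n * p n)) atTop (𝓝 1) := by
  -- Shrinking `γ` only strengthens the property, and the lower tail bound needs `γ < 1`.
  set γ' := min γ (1 / 2)
  have hγ'₀ : 0 < γ' := lt_min hγ (by norm_num)
  have hγ'₁ : γ' < 1 := (min_le_right _ _).trans_lt (by norm_num)
  have hγ'γ : γ' ≤ γ := min_le_left _ _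
  set κ := min (klFun (1 + γ')) (klFun (1 - γ'))
  have hκ : 0 < κ := lt_min (klFun_pos (by linarith) (by linarith))
    (klFun_pos (by linarith) (by linarith))
  refine tendsto_gnpProb_of_not_le hp (f := fun n => 2 * exp 1 * (n * exp (-(κ * (n * p n)))))
    (by simpa using (tendsto_natCast_mul_exp_neg_mul hgrowth hκ).const_mul (2 * exp 1))
    (Eventually.of_forall fun n => ?_)
  have hnp : 0 ≤ (n : ℝ) * p n := mul_nonneg n.cast_nonneg (hp n).1
  refine (gnpProb_mono (hp n) fun G hG => ?_).trans
    ((gnpProb_exists_degree_far_le (hp n) hγ'₀ hγ'₁).trans_eq ?_)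
  · push Not at hG
    obtain ⟨v, hv⟩ := hG
    refine ⟨v, fun ⟨hlo, hhi⟩ => ?_⟩
    have := hv (le_trans (by nlinarith) hlo)
    nlinarith
  · rw [sub_eq_add_neg, exp_add]
    ring

theorem tendsto_gnpProb_small_sets_sparse (hp : ∀ n, p n ∈ Set.Icc (0 : ℝ) 1)
    (hnp : Tendsto (fun n : ℕ => (n : ℝ) * p n) atTop atTop) :
    Tendsto (fun n : ℕ => gnpProb n (p n) (fun G =>
      ∀ X : Set (Fin n), (X.ncard : ℝ) < ((n : ℝ) * p n ^ 4) ^ (-(1 / 3) : ℝ) →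
        (spannedEdges G X : ℝ) ≤ 8 * X.ncard)) atTop (𝓝 1) := by
  have hL := tendsto_log_atTop.comp hnp
  refine tendsto_gnpProb_of_not_le hp (f := fun n => 2 * exp (-(log (n * p n) / 3)))
    (by simpa using (tendsto_exp_neg_atTop_nhds_zero.comp
      (hL.atTop_div_const (by norm_num : (0 : ℝ) < 3))).const_mul 2) ?_
  filter_upwards [hL.eventually_ge_atTop 3] with n hn
  have hp₀ : 0 < p n := (hp n).1.lt_of_ne fun h => by norm_num [← h] at hn
  refine (gnpProb_mono (hp n) fun G hG => ?_).trans (gnpProb_exists_small_dense_le (hp n) hp₀ hn)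
  push Not at hG
  obtain ⟨X, hXB, hX⟩ := hG
  exact ⟨X.toFinset, by rwa [← Set.ncard_eq_toFinset_card'],
    by rwa [Set.coe_toFinset, ← Set.ncard_eq_toFinset_card']⟩

theorem tendsto_gnpProb_large_sets_sparse (hp : ∀ n, p n ∈ Set.Icc (0 : ℝ) 1)
    (hnp : Tendsto (fun n : ℕ => (n : ℝ) * p n) atTop atTop) :
    Tendsto (fun n : ℕ => gnpProb n (p n) (fun G =>
      ∀ X : Set (Fin n), ((n : ℝ) * p n ^ 4) ^ (-(1 / 3) : ℝ) ≤ (X.ncard : ℝ) →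
        (spannedEdges G X : ℝ) ≤ (X.ncard : ℝ) ^ 2 * p n * √((n : ℝ) / X.ncard)))
      atTop (𝓝 1) := by
  have hR := tendsto_exp_atTop.comp
    ((tendsto_log_atTop.comp hnp).atTop_div_const (by norm_num : (0 : ℝ) < 3))
  refine tendsto_gnpProb_of_not_le hp (f := fun n => 2 * exp (-(exp (log (n * p n) / 3) / 40)))
    (by simpa using (tendsto_exp_neg_atTop_nhds_zero.comp
      (hR.atTop_div_const (by norm_num : (0 : ℝ) < 40))).const_mul 2) ?_
  filter_upwards [hR.eventually_ge_atTop 40] with n hn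
  have hp₀ : 0 < p n := (hp n).1.lt_of_ne fun h => by norm_num [← h] at hn
  refine (gnpProb_mono (hp n) fun G hG => ?_).trans (gnpProb_exists_large_dense_le (hp n) hp₀ hn)
  push Not at hG
  obtain ⟨X, hXB, hX⟩ := hG
  exact ⟨X.toFinset, by rwa [← Set.ncard_eq_toFinset_card'],
    by rwa [Set.coe_toFinset, ← Set.ncard_eq_toFinset_card']⟩

theorem tendsto_gnpProb_cross_edges (hp : ∀ n, p n ∈ Set.Icc (0 : ℝ) 1) {ω : ℕ → ℝ}
    (hω : Tendsto ω atTop atTop) :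
    Tendsto (fun n : ℕ => gnpProb n (p n) (fun G =>
      ∀ X Y : Set (Fin n), Disjoint X Y → ω n * n ≤ (X.ncard : ℝ) * Y.ncard * p n →
        (X.ncard : ℝ) * Y.ncard * p n / 2 ≤ (crossEdges G X Y : ℝ))) atTop (𝓝 1) := by
  have hr : 4 * exp (-2) < 1 := by
    have h2 : exp 2 = exp 1 * exp 1 := by rw [← exp_add]; norm_num
    rw [exp_neg, ← div_eq_mul_inv, div_lt_one (exp_pos 2), h2]
    nlinarith [add_one_lt_exp one_ne_zero]
  refine tendsto_gnpProb_of_not_le hp (f := fun n => (4 * exp (-2)) ^ n)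
    (tendsto_pow_atTop_nhds_zero_of_lt_one (by positivity) hr) ?_
  filter_upwards [hω.eventually_ge_atTop 16] with n hn
  refine (gnpProb_mono (hp n) fun G hG => ?_).trans
    ((gnpProb_exists_sparse_cut_le (hp n) (w := ω n)).trans ?_)
  · push Not at hG
    obtain ⟨X, Y, hXY, hμ, hcut⟩ := hG
    refine ⟨X.toFinset, Y.toFinset, Set.disjoint_toFinset.mpr hXY, ?_, ?_⟩
    · rwa [← Set.ncard_eq_toFinset_card', ← Set.ncard_eq_toFinset_card']
    · rwa [Set.coe_toFinset, Set.coe_toFinset, ← Set.ncard_eq_toFinset_card',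
        ← Set.ncard_eq_toFinset_card']
  · rw [mul_pow, ← exp_nat_mul]
    gcongr
    nlinarith [n.cast_nonneg (α := ℝ)]

end asymptotic

/-- **Lemma 2.8 (properties of `G(n,p)`).** For `p ≫ log n / n`, any fixed `γ > 0`, and any
`ω(n) → ∞`, a.a.s. `G(n,p)` satisfies: (i) all degrees are `(1 ± γ) n p`; (ii) sets `X` with
`|X| < (n p⁴)^{-1/3}` span at most `8 |X|` edges; (iii) sets `X` of size `t ≥ (n p⁴)^{-1/3}`
span at most `t² p (n/t)^{1/2}` edges; (iv) disjoint sets with `|X||Y| p ≥ ω(n) n` satisfy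
`e(X,Y) ≥ |X||Y| p / 2`. -/
theorem gnp_properties (p : ℕ → ℝ) (hp : ∀ n, p n ∈ Set.Icc (0 : ℝ) 1)
    (hgrowth : Tendsto (fun n : ℕ => (n : ℝ) * p n / Real.log n) atTop atTop)
    (γ : ℝ) (hγ : 0 < γ) (ω : ℕ → ℝ) (hω : Tendsto ω atTop atTop) :
    Tendsto (fun n : ℕ => gnpProb n (p n) (fun G =>
        (∀ v : Fin n, (1 - γ) * n * p n ≤ ((G.neighborSet v).ncard : ℝ) ∧
          ((G.neighborSet v).ncard : ℝ) ≤ (1 + γ) * n * p n) ∧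
        (∀ X : Set (Fin n), (X.ncard : ℝ) < ((n : ℝ) * p n ^ 4) ^ (-(1 / 3) : ℝ) →
          (spannedEdges G X : ℝ) ≤ 8 * X.ncard) ∧
        (∀ X : Set (Fin n), ((n : ℝ) * p n ^ 4) ^ (-(1 / 3) : ℝ) ≤ (X.ncard : ℝ) →
          (spannedEdges G X : ℝ) ≤ (X.ncard : ℝ) ^ 2 * p n * Real.sqrt ((n : ℝ) / X.ncard)) ∧
        (∀ X Y : Set (Fin n), Disjoint X Y →
          ω n * n ≤ (X.ncard : ℝ) * Y.ncard * p n →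
          (X.ncard : ℝ) * Y.ncard * p n / 2 ≤ (crossEdges G X Y : ℝ))))
      atTop (nhds 1) := by
  have hnp := tendsto_natCast_mul_of_div_log hgrowth
  exact (tendsto_gnpProb_degrees hp hgrowth hγ).gnpProb_and hp <|
    (tendsto_gnpProb_small_sets_sparse hp hnp).gnpProb_and hp <|
      (tendsto_gnpProb_large_sets_sparse hp hnp).gnpProb_and hp (tendsto_gnpProb_cross_edges hp hω)
end

section
/- Let G be a graph on n vertices with an incompatibility system F, and let M be a perfect matching in G over a partition A∪B (if n is even) or A∪B∪{v_*} (if n is odd). If the directed graph D_G(M;F) contains a directed Hamilton cycle, then G contains a Hamilton cycle compatible with F. -/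
open Filter

structure IncompSystem {V : Type*} (G : SimpleGraph V) : Type _ where
  incomp : Sym2 V → Sym2 V → Prop
  symm : ∀ e f, incomp e f → incomp f e
  mem_edgeSet : ∀ e f, incomp e f → e ∈ G.edgeSet
  ne_of_incomp : ∀ e f, incomp e f → e ≠ f
  share_vertex : ∀ e f, incomp e f → ∃ v, v ∈ e ∧ v ∈ f

/-- `G` contains a Hamilton cycle all of whose pairs of edges are compatible with `F`. -/
def HasCompatibleHamCycle {V : Type*} [DecidableEq V] (G : SimpleGraph V)
    (F : IncompSystem G) : Prop :=
  ∃ (v : V) (c : G.Walk v v), c.IsHamiltonianCycle ∧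
    ∀ e ∈ c.edges, ∀ f ∈ c.edges, ¬ F.incomp e f
/-- A perfect matching over a partition `A ∪ B` (for `n` even) or `A ∪ B ∪ {v_*}` (for `n` odd),
given by injections `a : Fin (n/2) → Fin n` (the set `A`), `b : Fin (n/2) → Fin n` (the set `B`)
and, when `n` is odd, an extra vertex `vstar`. -/
structure PerfectMatchingPartition {n : ℕ} (G : SimpleGraph (Fin n)) where
  a : Fin (n / 2) → Fin n
  b : Fin (n / 2) → Fin n
  vstar : Fin n
  inj_a : Function.Injective a
  inj_b : Function.Injective b
  disj : ∀ i j, a i ≠ b j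
  vstar_not_a : ¬ Even n → ∀ i, vstar ≠ a i
  vstar_not_b : ¬ Even n → ∀ i, vstar ≠ b i
  cover : ∀ v : Fin n, (∃ i, a i = v) ∨ (∃ i, b i = v) ∨ (¬ Even n ∧ v = vstar)
  edge_even : Even n → ∀ i, G.Adj (a i) (b i)
  edge_odd : ¬ Even n → ∀ i : Fin (n / 2), (i : ℕ) + 1 < n / 2 → G.Adj (a i) (b i)
  path_odd : ¬ Even n → ∀ i : Fin (n / 2), (i : ℕ) + 1 = n / 2 →
    G.Adj (a i) vstar ∧ G.Adj vstar (b i)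

/-- The edge of the matching `M` incident to the vertex `a i`. -/
noncomputable def PerfectMatchingPartition.edgeAtA {n : ℕ} {G : SimpleGraph (Fin n)}
    (M : PerfectMatchingPartition G) (i : Fin (n / 2)) : Sym2 (Fin n) :=
  if ¬ Even n ∧ (i : ℕ) + 1 = n / 2 then s(M.a i, M.vstar) else s(M.a i, M.b i)

/-- The edge of the matching `M` incident to the vertex `b i`. -/
noncomputable def PerfectMatchingPartition.edgeAtB {n : ℕ} {G : SimpleGraph (Fin n)}
    (M : PerfectMatchingPartition G) (i : Fin (n / 2)) : Sym2 (Fin n) :=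
  if ¬ Even n ∧ (i : ℕ) + 1 = n / 2 then s(M.vstar, M.b i) else s(M.a i, M.b i)

/-- The auxiliary digraph `D_G(M)`: vertex `i` stands for the matching edge `e_i`, with a
directed edge from `e_i` to `e_j` (for `i ≠ j`) iff `{b i, a j}` is an edge of `G`. -/
def DGM {n : ℕ} (G : SimpleGraph (Fin n)) (M : PerfectMatchingPartition G) :
    Fin (n / 2) → Fin (n / 2) → Prop :=
  fun i j => i ≠ j ∧ G.Adj (M.b i) (M.a j)

/-- The digraph `D_G(M; F)` obtained from `D_G(M)` by deleting the edges `(e_i, e_j)` for which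
`{b i, a j}` is incompatible with the matching edge at `b i` or the one at `a j`, as well as
(for `n` odd) all edges at the special vertex when the two edges through `v_*` are
incompatible. -/
def DGMF {n : ℕ} (G : SimpleGraph (Fin n)) (M : PerfectMatchingPartition G)
    (F : IncompSystem G) : Fin (n / 2) → Fin (n / 2) → Prop :=
  fun i j => DGM G M i j ∧
    ¬ F.incomp s(M.b i, M.a j) (M.edgeAtB i) ∧
    ¬ F.incomp s(M.b i, M.a j) (M.edgeAtA j) ∧
    ¬ (¬ Even n ∧ ∃ k : Fin (n / 2), (k : ℕ) + 1 = n / 2 ∧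
        F.incomp s(M.a k, M.vstar) s(M.vstar, M.b k) ∧ (i = k ∨ j = k))

/-- The minimum degree of a graph on `Fin n`. -/
noncomputable def minDeg {n : ℕ} (G : SimpleGraph (Fin n)) : ℕ :=
  sInf (Set.range fun v => (G.neighborSet v).ncard)

def DiHamCycle {V : Type*} [Fintype V] (Adj : V → V → Prop) : Prop :=
  ∃ f : ZMod (Fintype.card V) ≃ V, ∀ i, Adj (f i) (f (i + 1))

/-!
Follow the directed Hamilton cycle `ν` of `D_G(M; F)` through the matching: the walk
`a_i → b_i → a_{ν i} → b_{ν i} → ⋯`, with `v_*` inserted between `a_k` and `b_k` for the last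
index `k` when `n` is odd, is a Hamilton cycle of `G`, given by a successor map `σ` on the
vertices. Since `σ` is injective, two distinct edges `{u, σ u}`, `{v, σ v}` sharing a vertex are
consecutive, so compatibility only has to be checked at each vertex; at `a_i`, `b_i` and `v_*`
it is exactly one of the conditions defining the arcs of `D_G(M; F)`.
-/

open Function SimpleGraph

theorem Fin.val_eq_add_one_mod_of_val_sub_eq_one {c : ℕ} {i j : Fin c}
    (h : ((j - i : Fin c) : ℕ) = 1) : (j : ℕ) = (i + 1) % c := by
  rw [Fin.val_sub] at h
  have := i.isLt
  have := j.isLt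
  rcases le_or_gt (i : ℕ) j with hij | hij
  · rw [show c - i + j = (j - i) + c by omega, Nat.add_mod_right,
      Nat.mod_eq_of_lt (by omega)] at h
    rw [Nat.mod_eq_of_lt (by omega)]; omega
  · rw [Nat.mod_eq_of_lt (by omega)] at h
    rw [show (i : ℕ) + 1 = c by omega, Nat.mod_self]; omega

theorem Function.iterate_eq_succ_of_val_sub_eq_one {α : Type*} {σ : α → α} {x : α}
    {i j : Fin (minimalPeriod σ x)} (h : ((j - i : Fin _) : ℕ) = 1) :
    σ^[j] x = σ (σ^[i] x) := by
  rw [Fin.val_eq_add_one_mod_of_val_sub_eq_one h, iterate_mod_minimalPeriod_eq,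
    iterate_succ_apply']

namespace SimpleGraph

variable {V : Type*} [DecidableEq V] {G : SimpleGraph V}

theorem exists_isHamiltonianCycle_of_cycleGraph_hom {c : ℕ} (hc : 3 ≤ c)
    (φ : cycleGraph c →g G) (hφ : Bijective φ) :
    ∃ (v : V) (p : G.Walk v v), p.IsHamiltonianCycle ∧
      ∀ e ∈ p.edges, ∃ i j, (cycleGraph c).Adj i j ∧ e = s(φ i, φ j) := by
  obtain ⟨k, rfl⟩ : ∃ k, c = k + 3 := ⟨c - 3, by omega⟩
  have hcycle : (cycleGraph.cycle k).IsHamiltonianCycle :=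
    Walk.isHamiltonianCycle_iff_isCycle_and_length_eq.mpr ⟨cycleGraph.isCycle_cycle, by simp⟩
  refine ⟨φ 0, (cycleGraph.cycle k).map φ, hcycle.map hφ, fun e he => ?_⟩
  rw [Walk.edges_map, List.mem_map] at he
  obtain ⟨e, he, rfl⟩ := he
  induction e using Sym2.ind with
  | h i j => exact ⟨i, j, (cycleGraph.cycle k).adj_of_mem_edges he, rfl⟩

theorem exists_isHamiltonianCycle_of_iterate [Fintype V] {σ : V → V} (hσ : Injective σ)
    (x : V) (hreach : ∀ v, ∃ t, σ^[t] x = v) (hadj : ∀ v, G.Adj v (σ v))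
    (hcard : 3 ≤ Fintype.card V) :
    ∃ (u : V) (p : G.Walk u u), p.IsHamiltonianCycle ∧ ∀ e ∈ p.edges, ∃ v, e = s(v, σ v) := by
  -- the orbit of `x`, indexed by `Fin (minimalPeriod σ x)`, is a bijective copy of the cycle graph
  set c := minimalPeriod σ x
  have hc : 0 < c := minimalPeriod_pos_of_mem_periodicPts (hσ.mem_periodicPts x)
  let φ : Fin c → V := fun i => σ^[i] x
  have hsucc : ∀ {i j}, (cycleGraph c).Adj i j → φ j = σ (φ i) ∨ φ i = σ (φ j) := fun h =>
    (cycleGraph_adj'.mp h).symm.imp iterate_eq_succ_of_val_sub_eq_one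
      iterate_eq_succ_of_val_sub_eq_one
  have hφ : Bijective φ := by
    refine ⟨fun i j h => Fin.ext (iterate_injOn_Iio_minimalPeriod i.isLt j.isLt h), fun v => ?_⟩
    obtain ⟨t, rfl⟩ := hreach v
    exact ⟨⟨t % c, Nat.mod_lt t hc⟩, iterate_mod_minimalPeriod_eq⟩
  have h3 : 3 ≤ c :=
    hcard.trans ((Fintype.card_le_of_surjective φ hφ.2).trans_eq (Fintype.card_fin c))
  let ψ : cycleGraph c →g G := ⟨φ, fun h => (hsucc h).elim (fun h' => h' ▸ hadj _)
    (fun h' => h' ▸ (hadj _).symm)⟩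
  obtain ⟨u, p, hp, hedges⟩ := exists_isHamiltonianCycle_of_cycleGraph_hom h3 ψ hφ
  refine ⟨u, p, hp, fun e he => ?_⟩
  obtain ⟨i, j, hij, rfl⟩ := hedges e he
  rcases hsucc hij with h | h
  · exact ⟨φ i, by simp [ψ, h]⟩
  · exact ⟨φ j, by simp [ψ, h, Sym2.eq_swap]⟩

end SimpleGraph

namespace IncompSystem

variable {V : Type*} {G : SimpleGraph V} (F : IncompSystem G)

theorem not_incomp_succ_of_consecutive {σ : V → V} (hσ : Injective σ)
    (hloc : ∀ v, ¬ F.incomp s(v, σ v) s(σ v, σ (σ v))) (u v : V) :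
    ¬ F.incomp s(u, σ u) s(v, σ v) := by
  intro h
  obtain ⟨w, hwu, hwv⟩ := F.share_vertex _ _ h
  rw [Sym2.mem_iff] at hwu hwv
  rcases hwu with rfl | rfl <;> rcases hwv with huv | huv
  · exact F.ne_of_incomp _ _ h (by rw [huv])
  · exact hloc v (F.symm _ _ (huv ▸ h))
  · subst huv; exact hloc _ h
  · exact F.ne_of_incomp _ _ h (by rw [hσ huv])

theorem hasCompatibleHamCycle_of_iterate [Fintype V] [DecidableEq V] {σ : V → V}
    (hσ : Injective σ) (x : V) (hreach : ∀ v, ∃ t, σ^[t] x = v) (hadj : ∀ v, G.Adj v (σ v))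
    (hcard : 3 ≤ Fintype.card V) (hloc : ∀ v, ¬ F.incomp s(v, σ v) s(σ v, σ (σ v))) :
    HasCompatibleHamCycle G F := by
  obtain ⟨u, p, hp, hedges⟩ := exists_isHamiltonianCycle_of_iterate hσ x hreach hadj hcard
  refine ⟨u, p, hp, fun e he f hf => ?_⟩
  obtain ⟨v, rfl⟩ := hedges e he
  obtain ⟨w, rfl⟩ := hedges f hf
  exact F.not_incomp_succ_of_consecutive hσ hloc v w

end IncompSystem

theorem DiHamCycle.exists_perm {W : Type*} [Fintype W] {Adj : W → W → Prop}
    (h : DiHamCycle Adj) : ∃ ν : Equiv.Perm W, (∀ i, Adj i (ν i)) ∧ ∀ i j, ∃ t, ν^[t] i = j := by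
  obtain ⟨f, hf⟩ := h
  let ν : Equiv.Perm W := f.symm.trans ((Equiv.addRight 1).trans f)
  have hν : ∀ t : ℕ, ∀ x, ν^[t] (f x) = f (x + t) := by
    intro t
    induction t with
    | zero => simp
    | succ t ih => intro x; rw [iterate_succ_apply', ih]; simp [ν, add_assoc]
  refine ⟨ν, fun i => by simpa [ν] using hf (f.symm i), fun i j => ?_⟩
  have : NeZero (Fintype.card W) := ⟨(Fintype.card_pos_iff.mpr ⟨i⟩).ne'⟩
  refine ⟨(f.symm j - f.symm i).val, ?_⟩
  rw [← f.apply_symm_apply i, hν, ZMod.natCast_zmod_val]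
  simp

namespace PerfectMatchingPartition

variable {n : ℕ} {G : SimpleGraph (Fin n)} (M : PerfectMatchingPartition G)

noncomputable def mate (i : Fin (n / 2)) : Fin n :=
  if ¬ Even n ∧ (i : ℕ) + 1 = n / 2 then M.vstar else M.b i

theorem edgeAtA_eq_mate (i : Fin (n / 2)) : M.edgeAtA i = s(M.a i, M.mate i) := by
  unfold edgeAtA mate
  split_ifs <;> rfl

theorem adj_mate (i : Fin (n / 2)) : G.Adj (M.a i) (M.mate i) := by
  unfold mate
  split_ifs with hi
  · exact (M.path_odd hi.1 i hi.2).1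
  · by_cases hn : Even n
    · exact M.edge_even hn i
    · exact M.edge_odd hn i (lt_of_le_of_ne i.isLt fun h => hi ⟨hn, h⟩)

@[elab_as_elim]
theorem vertex_cases (hm : 0 < n / 2) {P : Fin n → Prop} (ha : ∀ i, P (M.a i))
    (hb : ∀ i, P (M.b i)) (hv : ¬ Even n → ∀ k : Fin (n / 2), (k : ℕ) + 1 = n / 2 → P M.vstar)
    (v : Fin n) : P v := by
  rcases M.cover v with ⟨i, rfl⟩ | ⟨i, rfl⟩ | ⟨hn, rfl⟩
  · exact ha i
  · exact hb i
  · exact hv hn ⟨n / 2 - 1, by omega⟩ (by simp only; omega)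

open Classical in
/-- The successor of a vertex on the cycle `⋯ → a_i → (v_*) → b_i → a_{ν i} → ⋯`, where `v_*`
occurs only after `a_k` for the last index `k` when `n` is odd; the final branch is never taken. -/
noncomputable def hamSucc (ν : Fin (n / 2) → Fin (n / 2)) (v : Fin n) : Fin n :=
  if h : ∃ i, M.a i = v then M.mate h.choose
  else if h : ∃ i, M.b i = v then M.a (ν h.choose)
  else if h : ∃ k : Fin (n / 2), (k : ℕ) + 1 = n / 2 then M.b h.choose
  else v

variable (ν : Fin (n / 2) → Fin (n / 2))

theorem hamSucc_a (i : Fin (n / 2)) : M.hamSucc ν (M.a i) = M.mate i := by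
  have h : ∃ j, M.a j = M.a i := ⟨i, rfl⟩
  rw [hamSucc, dif_pos h, M.inj_a h.choose_spec]

theorem hamSucc_b (i : Fin (n / 2)) : M.hamSucc ν (M.b i) = M.a (ν i) := by
  have h : ∃ j, M.b j = M.b i := ⟨i, rfl⟩
  rw [hamSucc, dif_neg fun ⟨j, hj⟩ => M.disj j i hj, dif_pos h, M.inj_b h.choose_spec]

theorem hamSucc_vstar (hn : ¬ Even n) {k : Fin (n / 2)} (hk : (k : ℕ) + 1 = n / 2) :
    M.hamSucc ν M.vstar = M.b k := by
  have h : ∃ k : Fin (n / 2), (k : ℕ) + 1 = n / 2 := ⟨k, hk⟩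
  rw [hamSucc, dif_neg fun ⟨j, hj⟩ => M.vstar_not_a hn j hj.symm,
    dif_neg fun ⟨j, hj⟩ => M.vstar_not_b hn j hj.symm, dif_pos h]
  exact congrArg M.b (Fin.ext (by have := h.choose_spec; omega))

theorem adj_hamSucc (hν : ∀ i, G.Adj (M.b i) (M.a (ν i))) (hm : 0 < n / 2) (v : Fin n) :
    G.Adj v (M.hamSucc ν v) := by
  refine M.vertex_cases hm (fun i => ?_) (fun i => ?_) (fun hn k hk => ?_) v
  · rw [hamSucc_a]; exact M.adj_mate i
  · rw [hamSucc_b]; exact hν i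
  · rw [M.hamSucc_vstar ν hn hk]; exact (M.path_odd hn k hk).2

theorem hamSucc_surjective (hν : Surjective ν) (hm : 0 < n / 2) : Surjective (M.hamSucc ν) := by
  refine M.vertex_cases hm (fun i => ?_) (fun i => ?_) (fun hn k hk => ?_)
  · obtain ⟨j, rfl⟩ := hν i
    exact ⟨M.b j, M.hamSucc_b ν j⟩
  · by_cases hi : ¬ Even n ∧ (i : ℕ) + 1 = n / 2
    · exact ⟨M.vstar, M.hamSucc_vstar ν hi.1 hi.2⟩
    · exact ⟨M.a i, by rw [hamSucc_a, mate, if_neg hi]⟩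
  · exact ⟨M.a k, by rw [hamSucc_a, mate, if_pos ⟨hn, hk⟩]⟩

theorem exists_iterate_hamSucc_eq {i₀ : Fin (n / 2)} (hreach : ∀ i, ∃ t, ν^[t] i₀ = i)
    (hm : 0 < n / 2) (v : Fin n) : ∃ t, (M.hamSucc ν)^[t] (M.a i₀) = v := by
  have hstep : ∀ {v}, (∃ t, (M.hamSucc ν)^[t] (M.a i₀) = v) →
      ∃ t, (M.hamSucc ν)^[t] (M.a i₀) = M.hamSucc ν v :=
    fun ⟨t, ht⟩ => ⟨t + 1, by rw [iterate_succ_apply', ht]⟩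
  have hb : ∀ {i}, (∃ t, (M.hamSucc ν)^[t] (M.a i₀) = M.a i) →
      ∃ t, (M.hamSucc ν)^[t] (M.a i₀) = M.b i := by
    intro i hi
    by_cases hsp : ¬ Even n ∧ (i : ℕ) + 1 = n / 2
    · have h := hstep (hstep hi)
      rwa [hamSucc_a, mate, if_pos hsp, M.hamSucc_vstar ν hsp.1 hsp.2] at h
    · have h := hstep hi
      rwa [hamSucc_a, mate, if_neg hsp] at h
  have ha : ∀ i, ∃ t, (M.hamSucc ν)^[t] (M.a i₀) = M.a i := by
    intro i
    obtain ⟨t, rfl⟩ := hreach i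
    induction t with
    | zero => exact ⟨0, rfl⟩
    | succ t ih =>
      have h := hstep (hb ih)
      rwa [hamSucc_b, ← iterate_succ_apply' ν] at h
  refine M.vertex_cases hm ha (fun i => hb (ha i)) (fun hn k hk => ?_) v
  have h := hstep (ha k)
  rwa [hamSucc_a, mate, if_pos ⟨hn, hk⟩] at h

theorem not_incomp_hamSucc (F : IncompSystem G) (hν : ∀ i, DGMF G M F i (ν i))
    (hm : 0 < n / 2) (v : Fin n) :
    ¬ F.incomp s(v, M.hamSucc ν v) s(M.hamSucc ν v, M.hamSucc ν (M.hamSucc ν v)) := by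
  refine M.vertex_cases hm (fun i => ?_) (fun i => ?_) (fun hn k hk => ?_) v
  · rw [hamSucc_a]
    by_cases hi : ¬ Even n ∧ (i : ℕ) + 1 = n / 2
    · rw [mate, if_pos hi, M.hamSucc_vstar ν hi.1 hi.2]
      exact fun h => (hν i).2.2.2 ⟨hi.1, i, hi.2, h, Or.inl rfl⟩
    · rw [mate, if_neg hi, hamSucc_b]
      intro h
      apply (hν i).2.1
      rw [edgeAtB, if_neg hi]
      exact F.symm _ _ h
  · rw [hamSucc_b, hamSucc_a, ← edgeAtA_eq_mate]
    exact (hν i).2.2.1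
  · rw [M.hamSucc_vstar ν hn hk, hamSucc_b]
    intro h
    apply (hν k).2.1
    rw [edgeAtB, if_pos ⟨hn, hk⟩]
    exact F.symm _ _ h

end PerfectMatchingPartition

/-- **Proposition 3.4.** If the auxiliary digraph `D_G(M; F)` contains a directed Hamilton
cycle, then `G` contains a Hamilton cycle compatible with `F`. -/
theorem compatible_ham_of_digraph_ham {n : ℕ} (G : SimpleGraph (Fin n))
    (F : IncompSystem G) (M : PerfectMatchingPartition G)
    (h : DiHamCycle (DGMF G M F)) :
    HasCompatibleHamCycle G F := by
  obtain ⟨ν, hν, hreach⟩ := h.exists_perm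
  obtain ⟨f, -⟩ := h
  have hm : 2 ≤ n / 2 := by
    by_contra hlt
    have := Fin.subsingleton_iff_le_one.mpr (by omega : n / 2 ≤ 1)
    exact (hν (f 0)).1.1 (Subsingleton.elim _ _)
  have hm₀ : 0 < n / 2 := by omega
  have hσ := Finite.injective_iff_surjective.mpr (M.hamSucc_surjective ν ν.surjective hm₀)
  exact F.hasCompatibleHamCycle_of_iterate hσ (M.a (f 0))
    (M.exists_iterate_hamSucc_eq ν (hreach (f 0)) hm₀)
    (M.adj_hamSucc ν (fun i => (hν i).1.2) hm₀)
    (by simp only [Fintype.card_fin]; omega) (M.not_incomp_hamSucc ν F hν hm₀)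
end

section
/- Let p1 = p1(n) and p2 = p2(n) be sequences of edge probabilities with 1 ≥ p1(n) ≥ p2(n) and n·p2(n)/log n → ∞, and let α, ε > 0 be reals. If the random graph G(n,p2) asymptotically almost surely has the property that for every (α+2ε)np2-bounded incompatibility system over it there exists a compatible Hamilton cycle, then the random graph G(n,p1) asymptotically almost surely has the property that for every (α+ε)np1-bounded incompatibility system over it there exists a compatible Hamilton cycle. -/
open Filter

/-- `F` is `Δ`-bounded: for every vertex `v` and edge `e ∋ v` of `G`, at most `Δ` edges
through `v` are incompatible with `e`. -/
def IncompSystem.Bounded {V : Type*} {G : SimpleGraph V} (F : IncompSystem G) (Δ : ℝ) : Prop :=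
  ∀ v : V, ∀ e ∈ G.edgeSet, v ∈ e →
    ({f : Sym2 V | v ∈ f ∧ F.incomp e f}.ncard : ℝ) ≤ Δ

/-!
Couple the two random graphs: draw `G ~ G(n,p₁)` and keep each of its edges independently with
probability `p₂ / p₁`, so that the thinned graph `H` is distributed as `G(n,p₂)`. Suppose `G`
carries an `(α+ε)np₁`-bounded system `F` without a compatible Hamilton cycle while `H` has the
property for `(α+2ε)np₂`-bounded systems. Then the restriction of `F` to `H` is not
`(α+2ε)np₂`-bounded, so for some vertex `v` and edge `e ∋ v`, more than `(α+2ε)np₂` of the at most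
`(α+ε)np₁` edges incompatible with `e` at `v` survive the thinning. Their expected number is at most
`(α+ε)np₂`, and the Chernoff bound with `λ = log ((α+2ε)/(α+ε))` makes this happen with probability
at most `exp (-c np₂)` where `c = (α+2ε)λ - ε > 0`. A union bound over fewer than `n³` pairs
`(v, e)` costs a factor `n³`, which `np₂ ≫ log n` absorbs.
-/

open Finset Real SimpleGraph Topology

theorem pow_add_mul_le_pow_mul_exp {a b m μ : ℝ} (k : ℕ) (hb : 0 ≤ b) (hba : b ≤ a)
    (hm : 0 ≤ m) (hμ : 0 ≤ μ) (hk : k * b ≤ μ * a) :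
    (a + b * m) ^ k ≤ a ^ k * exp (μ * m) := by
  rcases (hb.trans hba).eq_or_lt with ha | ha
  · obtain rfl : b = 0 := le_antisymm (ha ▸ hba) hb
    rw [← ha, zero_mul, add_zero]
    exact le_mul_of_one_le_right (by positivity) (one_le_exp (by positivity))
  · have hkb : k * (b / a) ≤ μ := by rwa [← mul_div_assoc, div_le_iff₀ ha]
    calc (a + b * m) ^ k = a ^ k * (1 + b / a * m) ^ k := by
          rw [← mul_pow]; congr 1; field_simp
      _ ≤ a ^ k * exp (b / a * m) ^ k := by
          gcongr
          linarith [add_one_le_exp (b / a * m)]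
      _ ≤ a ^ k * exp (μ * m) := by
          rw [← exp_nat_mul, ← mul_assoc]
          gcongr

section BinomialSubsets

variable {ι : Type*} [DecidableEq ι]

theorem sum_powerset_pow_mul_pow_mul_pow_card_filter {R : Type*} [CommSemiring R]
    (p : ι → Prop) [DecidablePred p] (b c d : R) (s : Finset ι) :
    ∑ t ∈ s.powerset, b ^ #t * d ^ (#s - #t) * c ^ #{x ∈ t | p x} =
      (b * c + d) ^ #{x ∈ s | p x} * (b + d) ^ #{x ∈ s | ¬ p x} := by
  have hprod := prod_add (fun x => if p x then b * c else b) (fun _ => d) s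
  simp only [ite_add, prod_ite, prod_const] at hprod
  rw [hprod]
  refine sum_congr rfl fun t ht => ?_
  rw [card_sdiff_of_subset (mem_powerset.1 ht), mul_pow,
    ← card_filter_add_card_filter_not p (s := t), pow_add]
  ring

theorem chernoff_bound (p : ι → Prop) [DecidablePred p] (s : Finset ι) {b d l τ : ℝ}
    (hb : 0 ≤ b) (hd : 0 ≤ d) (hl : 0 ≤ l) :
    ∑ t ∈ s.powerset with τ ≤ #{x ∈ t | p x}, b ^ #t * d ^ (#s - #t) ≤
      exp (-(l * τ)) * ((b * exp l + d) ^ #{x ∈ s | p x} * (b + d) ^ #{x ∈ s | ¬ p x}) := by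
  rw [← sum_powerset_pow_mul_pow_mul_pow_card_filter, mul_sum]
  calc ∑ t ∈ s.powerset with τ ≤ #{x ∈ t | p x}, b ^ #t * d ^ (#s - #t)
      ≤ ∑ t ∈ s.powerset with τ ≤ #{x ∈ t | p x},
          exp (-(l * τ)) * (b ^ #t * d ^ (#s - #t) * exp l ^ #{x ∈ t | p x}) := by
        refine sum_le_sum fun t ht => ?_
        have hτ := (mem_filter.1 ht).2
        have hmarkov : 1 ≤ exp (-(l * τ)) * exp l ^ #{x ∈ t | p x} := by
          rw [← exp_nat_mul, ← exp_add]
          exact one_le_exp (by nlinarith)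
        rw [mul_comm (b ^ #t * _), ← mul_assoc]
        exact le_mul_of_one_le_left (by positivity) hmarkov
    _ ≤ _ := sum_le_sum_of_subset_of_nonneg (filter_subset _ _) fun _ _ _ => by positivity

theorem chernoff_bound_thinning (p : ι → Prop) [DecidablePred p] (s : Finset ι)
    {a b l μ τ : ℝ} (hb : 0 ≤ b) (hba : b ≤ a) (hl : 0 ≤ l) (hμ : 0 ≤ μ)
    (hmean : #{x ∈ s | p x} * b ≤ μ * a) :
    ∑ t ∈ s.powerset with τ ≤ #{x ∈ t | p x}, b ^ #t * (a - b) ^ (#s - #t) ≤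
      exp (μ * (exp l - 1) - l * τ) * a ^ #s := by
  have ha : 0 ≤ a := hb.trans hba
  have hm : 0 ≤ exp l - 1 := by linarith [one_le_exp hl]
  calc _ ≤ exp (-(l * τ)) * ((b * exp l + (a - b)) ^ #{x ∈ s | p x} *
          (b + (a - b)) ^ #{x ∈ s | ¬ p x}) :=
        chernoff_bound p s hb (by linarith) hl
    _ = exp (-(l * τ)) * ((a + b * (exp l - 1)) ^ #{x ∈ s | p x} * a ^ #{x ∈ s | ¬ p x}) := by
        ring_nf
    _ ≤ exp (-(l * τ)) *
          (a ^ #{x ∈ s | p x} * exp (μ * (exp l - 1)) * a ^ #{x ∈ s | ¬ p x}) := by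
        gcongr
        exact pow_add_mul_le_pow_mul_exp _ hb hba hm hμ hmean
    _ = exp (μ * (exp l - 1) - l * τ) * a ^ #s := by
        rw [sub_eq_neg_add _ (l * τ), exp_add, ← card_filter_add_card_filter_not p (s := s),
          pow_add]
        ring

theorem sum_powerset_filter_superset {R : Type*} [CommSemiring R] (x y : R) {t U : Finset ι}
    (htU : t ⊆ U) :
    ∑ s ∈ U.powerset with t ⊆ s, x ^ (#s - #t) * y ^ (#U - #s) = (x + y) ^ (#U - #t) := by
  rw [← card_sdiff_of_subset htU, ← sum_pow_mul_eq_add_pow]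
  refine sum_nbij' (· \ t) (t ∪ ·) ?_ ?_ ?_ ?_ ?_
  · intro s hs
    simp only [mem_filter, mem_powerset] at hs ⊢
    exact sdiff_subset_sdiff hs.1 le_rfl
  · intro r hr
    simp only [mem_filter, mem_powerset] at hr ⊢
    exact ⟨union_subset htU (hr.trans sdiff_subset), subset_union_left⟩
  · intro s hs
    exact union_sdiff_of_subset (mem_filter.1 hs).2
  · intro r hr
    exact union_sdiff_cancel_left (disjoint_of_subset_right (mem_powerset.1 hr) disjoint_sdiff)
  · intro s hs
    simp only [mem_filter, mem_powerset] at hs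
    have := card_le_card hs.1
    have := card_le_card hs.2
    rw [card_sdiff_of_subset hs.2, card_sdiff_of_subset htU]
    congr 2
    omega

/- `b ^ #t * (a - b) ^ (#s - #t) * (1 - a) ^ (#U - #s)` is the probability that a random subset
of `U` containing each element with probability `a` is `s`, and that keeping each element of `s`
with probability `b / a` leaves `t`. -/
theorem sum_powerset_sum_powerset_filter {R : Type*} [CommRing R] (Q : Finset ι → Prop)
    [DecidablePred Q] (U : Finset ι) (a b : R) :
    ∑ s ∈ U.powerset, ∑ t ∈ s.powerset with Q t,
        b ^ #t * (a - b) ^ (#s - #t) * (1 - a) ^ (#U - #s) =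
      ∑ t ∈ U.powerset with Q t, b ^ #t * (1 - b) ^ (#U - #t) := by
  rw [sum_comm' (t' := {t ∈ U.powerset | Q t}) (s' := fun t => {s ∈ U.powerset | t ⊆ s})]
  · refine sum_congr rfl fun t ht => ?_
    simp only [mul_assoc, ← mul_sum]
    rw [sum_powerset_filter_superset _ _ (mem_powerset.1 (mem_filter.1 ht).1)]
    ring_nf
  · intro s t
    simp only [mem_filter, mem_powerset]
    constructor
    · rintro ⟨hsU, hts, hQ⟩
      exact ⟨⟨hsU, hts⟩, hts.trans hsU, hQ⟩
    · rintro ⟨⟨hsU, hts⟩, _, hQ⟩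
      exact ⟨hsU, hts, hQ⟩

theorem sum_powerset_filter_not_le_add_of_thinning (P Q : Finset ι → Prop) [DecidablePred P]
    [DecidablePred Q] {U : Finset ι} {a b δ : ℝ} (hb : 0 ≤ b) (hba : b ≤ a) (ha : a ≤ 1)
    (hδ : 0 ≤ δ)
    (h : ∀ s ⊆ U, ¬ P s → ∑ t ∈ s.powerset with Q t, b ^ #t * (a - b) ^ (#s - #t) ≤ δ * a ^ #s) :
    ∑ s ∈ U.powerset with ¬ P s, a ^ #s * (1 - a) ^ (#U - #s) ≤
      ∑ t ∈ U.powerset with ¬ Q t, b ^ #t * (1 - b) ^ (#U - #t) + δ := by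
  have ha0 : 0 ≤ a := hb.trans hba
  have h1a : 0 ≤ 1 - a := by linarith
  have hab : 0 ≤ a - b := by linarith
  have hsplit (s : Finset ι) : a ^ #s * (1 - a) ^ (#U - #s) =
      ∑ t ∈ s.powerset with ¬ Q t, b ^ #t * (a - b) ^ (#s - #t) * (1 - a) ^ (#U - #s) +
        (∑ t ∈ s.powerset with Q t, b ^ #t * (a - b) ^ (#s - #t)) * (1 - a) ^ (#U - #s) := by
    rw [sum_mul, sum_filter_not_add_sum_filter, ← sum_mul, sum_pow_mul_eq_add_pow, add_sub_cancel]
  calc ∑ s ∈ U.powerset with ¬ P s, a ^ #s * (1 - a) ^ (#U - #s)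
      ≤ ∑ s ∈ U.powerset with ¬ P s,
          (∑ t ∈ s.powerset with ¬ Q t, b ^ #t * (a - b) ^ (#s - #t) * (1 - a) ^ (#U - #s) +
            δ * (a ^ #s * (1 - a) ^ (#U - #s))) := by
        refine sum_le_sum fun s hs => (hsplit s).le.trans ?_
        simp only [mem_filter, mem_powerset] at hs
        rw [← mul_assoc]
        gcongr
        exact h s hs.1 hs.2
    _ ≤ ∑ s ∈ U.powerset,
          ∑ t ∈ s.powerset with ¬ Q t, b ^ #t * (a - b) ^ (#s - #t) * (1 - a) ^ (#U - #s) +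
        δ * ∑ s ∈ U.powerset, a ^ #s * (1 - a) ^ (#U - #s) := by
        rw [sum_add_distrib, ← mul_sum]
        refine add_le_add ?_ (mul_le_mul_of_nonneg_left ?_ hδ) <;>
          refine sum_le_sum_of_subset_of_nonneg (filter_subset _ _) fun _ _ _ => ?_
        · exact sum_nonneg fun _ _ => by positivity
        · positivity
    _ = ∑ t ∈ U.powerset with ¬ Q t, b ^ #t * (1 - b) ^ (#U - #t) + δ := by
        rw [sum_powerset_sum_powerset_filter, sum_pow_mul_eq_add_pow, add_sub_cancel, one_pow,
          mul_one]

end BinomialSubsets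

theorem sum_filter_le_sum_sum_filter {α κ M : Type*} [AddCommMonoid M] [PartialOrder M]
    [IsOrderedAddMonoid M] (T : Finset α) (I : Finset κ) {Q : α → Prop} {R : κ → α → Prop}
    [DecidablePred Q] [∀ i, DecidablePred (R i)] {w : α → M} (hw : ∀ t ∈ T, 0 ≤ w t)
    (hQ : ∀ t ∈ T, Q t → ∃ i ∈ I, R i t) :
    ∑ t ∈ T with Q t, w t ≤ ∑ i ∈ I, ∑ t ∈ T with R i t, w t := by
  simp only [sum_filter]
  rw [sum_comm]
  refine sum_le_sum fun t ht => ?_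
  have hterm (i : κ) : 0 ≤ if R i t then w t else 0 := by
    split_ifs
    exacts [hw t ht, le_rfl]
  split_ifs with hq
  · obtain ⟨i, hi, hR⟩ := hQ t ht hq
    exact (if_pos hR).symm.le.trans (single_le_sum (fun j _ => hterm j) hi)
  · exact sum_nonneg fun j _ => hterm j

namespace IncompSystem

variable {V : Type*} {G : SimpleGraph V}

def restrict (F : IncompSystem G) (H : SimpleGraph V) : IncompSystem H where
  incomp e f := F.incomp e f ∧ e ∈ H.edgeSet ∧ f ∈ H.edgeSet
  symm e f h := ⟨F.symm e f h.1, h.2.2, h.2.1⟩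
  mem_edgeSet _ _ h := h.2.1
  ne_of_incomp e f h := F.ne_of_incomp e f h.1
  share_vertex e f h := F.share_vertex e f h.1

theorem setOf_incomp_restrict (F : IncompSystem G) {H : SimpleGraph V} {e : Sym2 V}
    (he : e ∈ H.edgeSet) (v : V) :
    {f | v ∈ f ∧ (F.restrict H).incomp e f} = {f | v ∈ f ∧ F.incomp e f} ∩ H.edgeSet := by
  ext f
  simp only [restrict, Set.mem_inter_iff, Set.mem_ofPred_eq, he, true_and]
  tauto

end IncompSystem

section CompatibleHamCycle

variable {V : Type*} [DecidableEq V]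

theorem HasCompatibleHamCycle.of_le {H G : SimpleGraph V} (hle : H ≤ G) {F : IncompSystem G}
    (h : HasCompatibleHamCycle H (F.restrict H)) : HasCompatibleHamCycle G F := by
  obtain ⟨v, c, hc, hcomp⟩ := h
  refine ⟨v, c.mapLe hle, hc.map (f := Hom.ofLE hle) Function.bijective_id, ?_⟩
  rw [Walk.edges_mapLe_eq_edges]
  intro e he f hf hef
  exact hcomp e he f hf ⟨hef, c.edges_subset_edgeSet he, c.edges_subset_edgeSet hf⟩

def CompatiblyHamiltonian (G : SimpleGraph V) (Δ : ℝ) : Prop :=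
  ∀ F : IncompSystem G, F.Bounded Δ → HasCompatibleHamCycle G F

theorem CompatiblyHamiltonian.exists_lt_ncard_of_le {H G : SimpleGraph V} {τ : ℝ}
    (hH : CompatiblyHamiltonian H τ) (hle : H ≤ G) {F : IncompSystem G}
    (hF : ¬ HasCompatibleHamCycle G F) :
    ∃ v, ∃ e ∈ H.edgeSet, v ∈ e ∧ τ < ({f | v ∈ f ∧ F.incomp e f} ∩ H.edgeSet).ncard := by
  by_contra! hsmall
  refine hF (.of_le hle (hH _ fun v e he hv => ?_))
  rw [F.setOf_incomp_restrict he]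
  exact hsmall v e he hv

end CompatibleHamCycle

section FiniteEdgeSets

variable {V : Type*} [Fintype V] [DecidableEq V]

abbrev SimpleGraph.fromEdgeFinset (s : Finset (Sym2 V)) : SimpleGraph V := fromEdgeSet ↑s

theorem SimpleGraph.edgeSet_fromEdgeFinset {s : Finset (Sym2 V)}
    (hs : s ⊆ (⊤ : SimpleGraph V).edgeFinset) : (fromEdgeFinset s).edgeSet = s := by
  rw [edgeSet_fromEdgeSet, sdiff_eq_left, Set.disjoint_right]
  intro e he hes
  have := hs hes
  simp_all

theorem SimpleGraph.sum_eq_sum_powerset_edgeFinset {M : Type*} [AddCommMonoid M]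
    (f : SimpleGraph V → M) :
    ∑ G, f G = ∑ s ∈ (⊤ : SimpleGraph V).edgeFinset.powerset, f (fromEdgeFinset s) := by
  classical
  refine sum_nbij' (fun G => G.edgeFinset) fromEdgeFinset ?_ ?_ ?_ ?_ ?_
  · intro G _
    exact mem_powerset.2 (edgeFinset_mono le_top)
  · intro _ _
    exact mem_univ _
  · intro G _
    simp only [fromEdgeFinset, coe_edgeFinset, fromEdgeSet_edgeSet]
  · intro s hs
    exact coe_injective (by rw [coe_edgeFinset, edgeSet_fromEdgeFinset (mem_powerset.1 hs)])
  · intro G _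
    simp only [fromEdgeFinset, coe_edgeFinset, fromEdgeSet_edgeSet]

open Classical in
theorem sum_powerset_filter_compatiblyHamiltonian_le {s : Finset (Sym2 V)}
    (hs : s ⊆ (⊤ : SimpleGraph V).edgeFinset) {F : IncompSystem (fromEdgeFinset s)} {Δ : ℝ}
    (hF : F.Bounded Δ) (hno : ¬ HasCompatibleHamCycle _ F) {a b l μ τ : ℝ} (hb : 0 ≤ b)
    (hba : b ≤ a) (hl : 0 ≤ l) (hμ : 0 ≤ μ) (hmean : Δ * b ≤ μ * a) :
    ∑ t ∈ s.powerset with CompatiblyHamiltonian (fromEdgeFinset t) τ,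
        b ^ #t * (a - b) ^ (#s - #t) ≤
      Fintype.card V * #s * (exp (μ * (exp l - 1) - l * τ) * a ^ #s) := by
  have ha : 0 ≤ a := hb.trans hba
  have hab : 0 ≤ a - b := by linarith
  let I := {ve ∈ (univ : Finset V) ×ˢ s | ve.1 ∈ ve.2}
  calc _ ≤ ∑ ve ∈ I, ∑ t ∈ s.powerset with τ ≤ #{f ∈ t | ve.1 ∈ f ∧ F.incomp ve.2 f},
          b ^ #t * (a - b) ^ (#s - #t) := by
        refine sum_filter_le_sum_sum_filter _ _ (fun _ _ => by positivity) fun t ht hH => ?_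
        have hts := mem_powerset.1 ht
        obtain ⟨v, e, he, hv, hlt⟩ := hH.exists_lt_ncard_of_le
          (fromEdgeSet_mono (coe_subset.2 hts)) hno
        rw [edgeSet_fromEdgeFinset (hts.trans hs)] at he hlt
        refine ⟨(v, e), mem_filter.2 ⟨mem_product.2 ⟨mem_univ v, hts he⟩, hv⟩, hlt.le.trans_eq ?_⟩
        rw [← Set.ncard_coe_finset, coe_filter]
        congr 2
        ext f
        simp only [Set.mem_inter_iff, Set.mem_ofPred_eq, mem_coe]
        tauto
    _ ≤ ∑ _ve ∈ I, exp (μ * (exp l - 1) - l * τ) * a ^ #s := by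
        refine sum_le_sum fun ve hve => ?_
        obtain ⟨v, e⟩ := ve
        obtain ⟨hve, hv⟩ := mem_filter.1 hve
        refine chernoff_bound_thinning (fun f => v ∈ f ∧ F.incomp e f) s hb hba hl hμ ?_
        have he : e ∈ (fromEdgeFinset s).edgeSet := by
          rw [edgeSet_fromEdgeFinset hs]
          exact (mem_product.1 hve).2
        have hcard : (#{f ∈ s | v ∈ f ∧ F.incomp e f} : ℝ) ≤ Δ := by
          refine le_trans ?_ (hF v e he hv)
          rw [← Set.ncard_coe_finset, coe_filter]
          exact_mod_cast Set.ncard_le_ncard (fun f (hf : f ∈ s ∧ _) => hf.2) (Set.toFinite _)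
        exact (mul_le_mul_of_nonneg_right hcard hb).trans hmean
    _ ≤ Fintype.card V * #s * (exp (μ * (exp l - 1) - l * τ) * a ^ #s) := by
        rw [sum_const, nsmul_eq_mul]
        have hI : #I ≤ Fintype.card V * #s := (card_filter_le _ _).trans_eq (by simp)
        gcongr
        exact_mod_cast hI

end FiniteEdgeSets

open Classical in
theorem gnpProb_eq_sum_powerset (n : ℕ) (p : ℝ) (P : SimpleGraph (Fin n) → Prop) :
    gnpProb n p P =
      ∑ s ∈ (⊤ : SimpleGraph (Fin n)).edgeFinset.powerset with P (fromEdgeFinset s),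
        p ^ #s * (1 - p) ^ (#(⊤ : SimpleGraph (Fin n)).edgeFinset - #s) := by
  rw [gnpProb, sum_eq_sum_powerset_edgeFinset, sum_filter, card_edgeFinset_top_eq_card_choose_two,
    Fintype.card_fin]
  refine sum_congr rfl fun s hs => ?_
  rw [edgeSet_fromEdgeFinset (mem_powerset.1 hs), Set.ncard_coe_finset]

open Classical in
theorem one_sub_gnpProb_eq_sum_powerset (n : ℕ) (p : ℝ) (P : SimpleGraph (Fin n) → Prop) :
    1 - gnpProb n p P =
      ∑ s ∈ (⊤ : SimpleGraph (Fin n)).edgeFinset.powerset with ¬ P (fromEdgeFinset s),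
        p ^ #s * (1 - p) ^ (#(⊤ : SimpleGraph (Fin n)).edgeFinset - #s) := by
  rw [gnpProb_eq_sum_powerset, sub_eq_iff_eq_add', sum_filter_add_sum_filter_not,
    sum_pow_mul_eq_add_pow, add_sub_cancel, one_pow]

theorem gnpProb_le_one (n : ℕ) {p : ℝ} (hp₀ : 0 ≤ p) (hp₁ : p ≤ 1)
    (P : SimpleGraph (Fin n) → Prop) : gnpProb n p P ≤ 1 := by
  have h1p : 0 ≤ 1 - p := by linarith
  have hfail := one_sub_gnpProb_eq_sum_powerset n p P
  have : 0 ≤ 1 - gnpProb n p P := hfail ▸ sum_nonneg fun _ _ => by positivity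
  linarith

theorem one_sub_gnpProb_compatiblyHamiltonian_le (n : ℕ) {a b α ε : ℝ} (hb : 0 ≤ b)
    (hba : b ≤ a) (ha : a ≤ 1) (hαε : 0 < α + ε) (hε : 0 ≤ ε) :
    1 - gnpProb n a (CompatiblyHamiltonian · ((α + ε) * n * a)) ≤
      1 - gnpProb n b (CompatiblyHamiltonian · ((α + 2 * ε) * n * b)) +
        n ^ 3 * exp (-(((α + 2 * ε) * log ((α + 2 * ε) / (α + ε)) - ε) * (n * b))) := by
  classical
  have hratio : 1 ≤ (α + 2 * ε) / (α + ε) := by rw [one_le_div hαε]; linarith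
  rw [one_sub_gnpProb_eq_sum_powerset, one_sub_gnpProb_eq_sum_powerset]
  refine sum_powerset_filter_not_le_add_of_thinning _ _ hb hba ha (by positivity) ?_
  intro s hs hbad
  simp only [CompatiblyHamiltonian, not_forall] at hbad
  obtain ⟨F, hF, hno⟩ := hbad
  have hpairs : (Fintype.card (Fin n) * #s : ℝ) ≤ n ^ 3 := by
    have : #s ≤ n ^ 2 := (card_le_card hs).trans <| by
      rw [card_edgeFinset_top_eq_card_choose_two, Fintype.card_fin]; exact n.choose_le_pow 2
    rw [Fintype.card_fin, pow_succ' _ 2]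
    gcongr
    exact_mod_cast this
  refine (sum_powerset_filter_compatiblyHamiltonian_le hs hF hno hb hba (log_nonneg hratio)
    (μ := (α + ε) * n * b) (by positivity) (le_of_eq (by ring))).trans ?_
  have hexponent : (α + ε) * n * b * (exp (log ((α + 2 * ε) / (α + ε))) - 1) -
      log ((α + 2 * ε) / (α + ε)) * ((α + 2 * ε) * n * b) =
      -(((α + 2 * ε) * log ((α + 2 * ε) / (α + ε)) - ε) * (n * b)) := by
    rw [exp_log (by positivity)]
    field_simp
    ring
  rw [hexponent, ← mul_assoc]
  have ha0 : 0 ≤ a := hb.trans hba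
  gcongr

theorem sub_lt_mul_log_div {x y : ℝ} (hx : 0 < x) (hxy : x < y) : y - x < y * log (y / x) := by
  have hy : 0 < y := hx.trans hxy
  have hlog : log (x / y) < x / y - 1 :=
    log_lt_sub_one_of_pos (by positivity) ((div_lt_one hy).2 hxy).ne
  rw [← inv_div, log_inv]
  have : y * (x / y - 1) = x - y := by field_simp
  nlinarith

theorem tendsto_pow_mul_exp_neg_mul_nhds_zero {f : ℕ → ℝ}
    (hf : Tendsto (fun n => f n / log n) atTop atTop) {c : ℝ} (hc : 0 < c) (k : ℕ) :
    Tendsto (fun n : ℕ => (n : ℝ) ^ k * exp (-(c * f n))) atTop (𝓝 0) := by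
  have hlog : Tendsto (fun n : ℕ => log n) atTop atTop :=
    tendsto_log_atTop.comp tendsto_natCast_atTop_atTop
  have hexponent : Tendsto (fun n : ℕ => log n * (k + -(c * (f n / log n)))) atTop atBot :=
    hlog.atTop_mul_atBot₀
      (tendsto_atBot_add_const_left _ _ (tendsto_neg_atTop_atBot.comp (hf.const_mul_atTop hc)))
  refine (tendsto_exp_atBot.comp hexponent).congr' ?_
  filter_upwards [eventually_gt_atTop 1] with n hn
  have hn' : (1 : ℝ) < n := by exact_mod_cast hn
  have hlogn : log n ≠ 0 := (log_pos hn').ne'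
  have : log n * (k + -(c * (f n / log n))) = k * log n + -(c * f n) := by
    field_simp
  rw [Function.comp_apply, this, exp_add, exp_nat_mul, exp_log (by linarith)]

/-- **Lemma 3.9 (probability transfer).** If `1 ≥ p₁ ≥ p₂ ≫ log n / n` and a.a.s. `G(n,p₂)`
has a compatible Hamilton cycle for every `(α + 2ε) n p₂`-bounded incompatibility system,
then a.a.s. `G(n,p₁)` has a compatible Hamilton cycle for every `(α + ε) n p₁`-bounded
incompatibility system. -/
theorem probability_transfer (p₁ p₂ : ℕ → ℝ)
    (hp₁ : ∀ n, p₁ n ≤ 1) (hp₂nonneg : ∀ n, 0 ≤ p₂ n) (hle : ∀ n, p₂ n ≤ p₁ n)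
    (hgrowth : Tendsto (fun n : ℕ => (n : ℝ) * p₂ n / Real.log n) atTop atTop)
    (α ε : ℝ) (hα : 0 < α) (hε : 0 < ε)
    (hyp : Tendsto (fun n : ℕ => gnpProb n (p₂ n) (fun G =>
        ∀ F : IncompSystem G, F.Bounded ((α + 2 * ε) * n * p₂ n) →
          HasCompatibleHamCycle G F)) atTop (nhds 1)) :
    Tendsto (fun n : ℕ => gnpProb n (p₁ n) (fun G =>
        ∀ F : IncompSystem G, F.Bounded ((α + ε) * n * p₁ n) →
          HasCompatibleHamCycle G F)) atTop (nhds 1) := by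
  have hαε : 0 < α + ε := by linarith
  have hrate := sub_lt_mul_log_div hαε (show α + ε < α + 2 * ε by linarith)
  rw [show α + 2 * ε - (α + ε) = ε by ring] at hrate
  have herror := tendsto_pow_mul_exp_neg_mul_nhds_zero hgrowth (sub_pos.2 hrate) 3
  have hlower := hyp.sub herror
  rw [sub_zero] at hlower
  refine tendsto_of_tendsto_of_tendsto_of_le_of_le hlower tendsto_const_nhds (fun n => ?_)
    fun n => gnpProb_le_one n ((hp₂nonneg n).trans (hle n)) (hp₁ n) _
  have hfail :=
    one_sub_gnpProb_compatiblyHamiltonian_le n (hp₂nonneg n) (hle n) (hp₁ n) hαε hε.le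
  simp only [CompatiblyHamiltonian] at hfail
  dsimp only
  linarith
end

section
/- For every sequence of edge probabilities p = p(n) ∈ [0,1] with p(n) ≤ log^9 n / n, the random graph G = G(n,p) asymptotically almost surely has the following property: for every vertex v, there is at most one vertex w ≠ v whose codegree with v equals 2, and every other vertex u ∉ {v,w} has codegree at most 1 with v; in particular, no vertex has codegree 3 or more with v. -/
open Filter

/-- The codegree of two vertices: the number of their common neighbors. -/
noncomputable def codeg {n : ℕ} (G : SimpleGraph (Fin n)) (v w : Fin n) : ℕ :=
  (G.neighborSet v ∩ G.neighborSet w).ncard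

open Finset

open scoped Classical

namespace GnpAux

variable {n : ℕ} {p : ℝ}

/-- key counting identity -/
lemma sum_w_subsets (n : ℕ) (p : ℝ) (S : Finset (Sym2 (Fin n)))
    (hS : ∀ e ∈ S, ¬ e.IsDiag) :
    gnpProb n p (fun G => ↑S ⊆ G.edgeSet) = p ^ S.card := by
  classical
  set M := (⊤ : SimpleGraph (Fin n)).edgeFinset with hM
  have hSM : S ⊆ M := by
    intro e he
    rw [hM, SimpleGraph.mem_edgeFinset, SimpleGraph.edgeSet_top]
    exact hS e he
  have hMcard : M.card = n.choose 2 := by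
    rw [hM, SimpleGraph.card_edgeFinset_top_eq_card_choose_two, Fintype.card_fin]
  have step1 : gnpProb n p (fun G => ↑S ⊆ G.edgeSet) =
      ∑ s ∈ M.powerset, (if S ⊆ s then p ^ s.card * (1 - p) ^ (n.choose 2 - s.card) else 0) := by
    rw [gnpProb]
    refine Finset.sum_nbij' (fun G => G.edgeFinset) (fun s => SimpleGraph.fromEdgeSet ↑s)
      ?_ ?_ ?_ ?_ ?_
    · intro G _
      rw [Finset.mem_powerset]
      exact SimpleGraph.edgeFinset_mono le_top
    · intro s _
      exact Finset.mem_univ _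
    · intro G _
      show SimpleGraph.fromEdgeSet ↑(G.edgeFinset) = G
      rw [SimpleGraph.coe_edgeFinset, SimpleGraph.fromEdgeSet_edgeSet]
    · intro s hs
      rw [Finset.mem_powerset] at hs
      beta_reduce
      refine Finset.ext fun e => ?_
      simp only [SimpleGraph.mem_edgeFinset]
      rw [SimpleGraph.edgeSet_fromEdgeSet]
      constructor
      · rintro ⟨he, -⟩; exact_mod_cast he
      · intro he
        refine ⟨by exact_mod_cast he, ?_⟩
        have h2 : e ∈ M := hs he
        rw [hM, SimpleGraph.mem_edgeFinset, SimpleGraph.edgeSet_top] at h2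
        exact h2
    · intro G _
      have hcard : G.edgeSet.ncard = G.edgeFinset.card := by
        rw [← SimpleGraph.coe_edgeFinset, Set.ncard_coe_finset]
      have hcond : (↑S ⊆ G.edgeSet) ↔ S ⊆ G.edgeFinset := by
        rw [← SimpleGraph.coe_edgeFinset, Finset.coe_subset]
      show (if ↑S ⊆ G.edgeSet then p ^ G.edgeSet.ncard * (1 - p) ^ (n.choose 2 - G.edgeSet.ncard) else 0)
          = if S ⊆ G.edgeFinset then p ^ G.edgeFinset.card * (1 - p) ^ (n.choose 2 - G.edgeFinset.card) else 0
      rw [hcard]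
      exact if_congr hcond rfl rfl
  rw [step1]
  have step2 : ∑ s ∈ M.powerset, (if S ⊆ s then p ^ s.card * (1 - p) ^ (n.choose 2 - s.card) else 0)
      = ∑ t ∈ (M \ S).powerset, p ^ (t.card + S.card) * (1 - p) ^ ((M \ S).card - t.card) := by
    rw [Finset.sum_ite, Finset.sum_const_zero, add_zero]
    refine Finset.sum_nbij' (fun s => s \ S) (fun t => t ∪ S) ?_ ?_ ?_ ?_ ?_
    · intro s hs
      simp only [Finset.mem_filter, Finset.mem_powerset] at hs
      rw [Finset.mem_powerset]
      exact Finset.sdiff_subset_sdiff hs.1 (le_refl S)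
    · intro t ht
      rw [Finset.mem_powerset] at ht
      simp only [Finset.mem_filter, Finset.mem_powerset]
      constructor
      · exact Finset.union_subset (ht.trans (Finset.sdiff_subset)) hSM
      · exact Finset.subset_union_right
    · intro s hs
      simp only [Finset.mem_filter, Finset.mem_powerset] at hs
      exact Finset.sdiff_union_of_subset hs.2
    · intro t ht
      rw [Finset.mem_powerset] at ht
      have hdisj : Disjoint t S := Finset.disjoint_of_subset_left ht sdiff_disjoint
      show (t ∪ S) \ S = t
      rw [Finset.union_sdiff_right, Finset.sdiff_eq_self_of_disjoint hdisj]
    · intro s hs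
      simp only [Finset.mem_filter, Finset.mem_powerset] at hs
      have h1 : (s \ S).card + S.card = s.card := by
        rw [Finset.card_sdiff_of_subset hs.2]
        exact Nat.sub_add_cancel (Finset.card_le_card hs.2)
      have h2 : (M \ S).card - (s \ S).card = n.choose 2 - s.card := by
        rw [Finset.card_sdiff_of_subset hSM, Finset.card_sdiff_of_subset hs.2, hMcard]
        have := Finset.card_le_card hs.1
        have := Finset.card_le_card hs.2
        have := Finset.card_le_card hSM
        rw [hMcard] at *
        omega
      rw [h1, h2]
  rw [step2]
  have step3 : ∀ t ∈ (M \ S).powerset, p ^ (t.card + S.card) * (1 - p) ^ ((M \ S).card - t.card)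
      = p ^ S.card * ((∏ _x ∈ t, p) * ∏ _x ∈ (M \ S) \ t, (1 - p)) := by
    intro t ht
    rw [Finset.mem_powerset] at ht
    rw [Finset.prod_const, Finset.prod_const, Finset.card_sdiff_of_subset ht, pow_add]
    ring
  rw [Finset.sum_congr rfl step3, ← Finset.mul_sum, ← Finset.prod_add (fun _ => p) (fun _ => (1-p)) (M \ S)]
  simp

lemma gnp_total (n : ℕ) (p : ℝ) : gnpProb n p (fun _ => True) = 1 := by
  have h := sum_w_subsets n p ∅ (by simp)
  simpa using h

lemma gnp_nonneg (n : ℕ) (p : ℝ) (hp0 : 0 ≤ p) (hp1 : p ≤ 1) (P : SimpleGraph (Fin n) → Prop) :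
    0 ≤ gnpProb n p P := by
  rw [gnpProb]
  refine Finset.sum_nonneg fun G _ => ?_
  split
  · exact mul_nonneg (pow_nonneg hp0 _) (pow_nonneg (by linarith) _)
  · exact le_refl 0
  
lemma gnp_compl (n : ℕ) (p : ℝ) (P : SimpleGraph (Fin n) → Prop) :
    gnpProb n p P = 1 - gnpProb n p (fun G => ¬ P G) := by
  have h : gnpProb n p P + gnpProb n p (fun G => ¬ P G) = 1 := by
    rw [← gnp_total n p, gnpProb, gnpProb, gnpProb, ← Finset.sum_add_distrib]
    refine Finset.sum_congr rfl fun G _ => ?_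
    by_cases hP : P G <;> simp [hP]
  linarith

lemma gnp_mono (n : ℕ) (p : ℝ) (hp0 : 0 ≤ p) (hp1 : p ≤ 1)
    (P Q : SimpleGraph (Fin n) → Prop) (h : ∀ G, P G → Q G) :
    gnpProb n p P ≤ gnpProb n p Q := by
  rw [gnpProb, gnpProb]
  refine Finset.sum_le_sum fun G _ => ?_
  by_cases hP : P G
  · rw [if_pos hP, if_pos (h G hP)]
  · rw [if_neg hP]
    split
    · exact mul_nonneg (pow_nonneg hp0 _) (pow_nonneg (by linarith) _)
    · exact le_refl 0

lemma gnp_le_one (n : ℕ) (p : ℝ) (hp0 : 0 ≤ p) (hp1 : p ≤ 1) (P : SimpleGraph (Fin n) → Prop) :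
    gnpProb n p P ≤ 1 := by
  rw [gnp_compl]
  have := gnp_nonneg n p hp0 hp1 (fun G => ¬ P G)
  linarith

lemma gnp_union (n : ℕ) (p : ℝ) (hp0 : 0 ≤ p) (hp1 : p ≤ 1) {ι : Type} [Fintype ι]
    (P : SimpleGraph (Fin n) → Prop) (Q : ι → SimpleGraph (Fin n) → Prop)
    (h : ∀ G, P G → ∃ i, Q i G) :
    gnpProb n p P ≤ ∑ i : ι, gnpProb n p (Q i) := by
  simp only [gnpProb]
  rw [Finset.sum_comm]
  refine Finset.sum_le_sum fun G _ => ?_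
  have hnn : 0 ≤ p ^ G.edgeSet.ncard * (1 - p) ^ (n.choose 2 - G.edgeSet.ncard) :=
    mul_nonneg (pow_nonneg hp0 _) (pow_nonneg (by linarith) _)
  by_cases hP : P G
  · rw [if_pos hP]
    obtain ⟨i0, hi0⟩ := h G hP
    calc p ^ G.edgeSet.ncard * (1 - p) ^ (n.choose 2 - G.edgeSet.ncard)
        = if Q i0 G then p ^ G.edgeSet.ncard * (1 - p) ^ (n.choose 2 - G.edgeSet.ncard) else 0 := by
          rw [if_pos hi0]
      _ ≤ _ := by
          refine Finset.single_le_sum (f := fun i => if Q i G then p ^ G.edgeSet.ncard * (1 - p) ^ (n.choose 2 - G.edgeSet.ncard) else 0) (fun i _ => ?_) (Finset.mem_univ i0)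
          beta_reduce
          split
          · exact hnn
          · exact le_refl 0
  · rw [if_neg hP]
    refine Finset.sum_nonneg fun i _ => ?_
    split
    · exact hnn
    · exact le_refl 0


lemma sum_pow_image_card (k n : ℕ) (p : ℝ) (hp0 : 0 ≤ p) (hp1 : p ≤ 1) :
    ∑ f : Fin k → Fin n, p ^ (Finset.univ.image f).card ≤
      (k ^ k : ℝ) * ∑ j ∈ Finset.range (k + 1), ((n : ℝ) * p) ^ j := by
  classical
  have hmaps : ∀ f ∈ (univ : Finset (Fin k → Fin n)),
      (Finset.univ.image f).card ∈ Finset.range (k + 1) := by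
    intro f _
    rw [Finset.mem_range, Nat.lt_succ_iff]
    exact (Finset.card_image_le).trans (by simp)
  have hfib := Finset.sum_fiberwise_of_maps_to (g := fun f : Fin k → Fin n => (Finset.univ.image f).card)
    hmaps (fun f => p ^ (Finset.univ.image f).card)
  rw [← hfib]
  have hcount : ∀ j, ((univ.filter fun f : Fin k → Fin n => (Finset.univ.image f).card = j).card : ℝ)
      ≤ (n : ℝ) ^ j * (k : ℝ) ^ k := by
    intro j
    by_cases hcase : ∃ f : Fin k → Fin n, (Finset.univ.image f).card = j
    · obtain ⟨f0, hf0⟩ := hcase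
      have hjk : j ≤ k := hf0 ▸ (Finset.card_image_le).trans (by simp)
      have hsub : (univ.filter fun f : Fin k → Fin n => (Finset.univ.image f).card = j) ⊆
          (Finset.powersetCard j (univ : Finset (Fin n))).biUnion
            (fun s => Fintype.piFinset (fun _ : Fin k => s)) := by
        intro f hf
        rw [Finset.mem_filter] at hf
        rw [Finset.mem_biUnion]
        refine ⟨Finset.univ.image f, ?_, ?_⟩
        · rw [Finset.mem_powersetCard]
          exact ⟨Finset.subset_univ _, hf.2⟩
        · rw [Fintype.mem_piFinset]
          exact fun i => Finset.mem_image_of_mem f (Finset.mem_univ i)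
      have h1 : (univ.filter fun f : Fin k → Fin n => (Finset.univ.image f).card = j).card
          ≤ (Finset.powersetCard j (univ : Finset (Fin n))).card * j ^ k := by
        refine (Finset.card_le_card hsub).trans ?_
        refine (Finset.card_biUnion_le).trans ?_
        refine le_trans (Finset.sum_le_sum (fun s hs => ?_)) (by rw [Finset.sum_const, smul_eq_mul])
        rw [Fintype.card_piFinset]
        rw [Finset.mem_powersetCard] at hs
        simp [hs.2]
      calc ((univ.filter fun f : Fin k → Fin n => (Finset.univ.image f).card = j).card : ℝ)
          ≤ ((Finset.powersetCard j (univ : Finset (Fin n))).card : ℝ) * (j : ℝ) ^ k := by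
            exact_mod_cast h1
        _ ≤ (n : ℝ) ^ j * (k : ℝ) ^ k := by
            refine mul_le_mul ?_ ?_ (by positivity) (by positivity)
            · rw [Finset.card_powersetCard, Finset.card_univ, Fintype.card_fin]
              calc ((n.choose j : ℝ)) ≤ (n : ℝ) ^ j / (j.factorial : ℝ) := Nat.choose_le_pow_div j n
                _ ≤ (n : ℝ) ^ j := by
                    refine div_le_self (by positivity) ?_
                    exact_mod_cast Nat.one_le_iff_ne_zero.mpr (Nat.factorial_ne_zero j)
            · exact pow_le_pow_left₀ (by positivity) (by exact_mod_cast hjk) k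
    · have : (univ.filter fun f : Fin k → Fin n => (Finset.univ.image f).card = j) = ∅ := by
        rw [Finset.filter_eq_empty_iff]
        intro f _
        exact fun hc => hcase ⟨f, hc⟩
      rw [this]
      simp
      positivity
  calc ∑ j ∈ Finset.range (k + 1), ∑ f ∈ univ.filter (fun f : Fin k → Fin n => (Finset.univ.image f).card = j), p ^ (Finset.univ.image f).card
      = ∑ j ∈ Finset.range (k + 1), ((univ.filter fun f : Fin k → Fin n => (Finset.univ.image f).card = j).card : ℝ) * p ^ j := by
        refine Finset.sum_congr rfl fun j _ => ?_
        rw [Finset.sum_congr rfl (fun f hf => ?_), Finset.sum_const, nsmul_eq_mul]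
        rw [Finset.mem_filter] at hf
        rw [hf.2]
    _ ≤ ∑ j ∈ Finset.range (k + 1), ((n:ℝ) ^ j * (k:ℝ) ^ k) * p ^ j := by
        refine Finset.sum_le_sum fun j _ => ?_
        exact mul_le_mul_of_nonneg_right (hcount j) (by positivity)
    _ = (k ^ k : ℝ) * ∑ j ∈ Finset.range (k + 1), ((n : ℝ) * p) ^ j := by
        rw [Finset.mul_sum]
        refine Finset.sum_congr rfl fun j _ => ?_
        rw [mul_pow]
        ring


lemma card_le_list {α : Type*} [DecidableEq α] (a b c d e : α) :
    ({a,b,c,d,e} : Finset α).card ≤ 5 := by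
  have : ({a,b,c,d,e} : Finset α) = ([a,b,c,d,e] : List α).toFinset := by simp
  rw [this]
  exact (List.toFinset_card_le _)

lemma card_pattern1 {α : Type*} [DecidableEq α] {v w x1 x2 x3 : α}
    (hx12 : x1 ≠ x2) (hx13 : x1 ≠ x3) (hx23 : x2 ≠ x3)
    (hx1v : x1 ≠ v) (hx2v : x2 ≠ v) (hx3v : x3 ≠ v)
    (hx1w : x1 ≠ w) (hx2w : x2 ≠ w) (hx3w : x3 ≠ w) (hvw : v ≠ w) :
    ({v, w, x1, x2, x3} : Finset α).card + 1 ≤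
      ({s(v,x1), s(v,x2), s(v,x3), s(w,x1), s(w,x2), s(w,x3)} : Finset (Sym2 α)).card := by
  have hX : ({x1, x2, x3} : Finset α).card = 3 := by
    rw [Finset.card_insert_of_notMem (by simp [hx12, hx13]),
      Finset.card_insert_of_notMem (by simp [hx23]), Finset.card_singleton]
  have hEv : ({s(v,x1), s(v,x2), s(v,x3)} : Finset (Sym2 α))
      = ({x1, x2, x3} : Finset α).image (fun z => s(v,z)) := by
    simp [Finset.image_insert]
  have hEw : ({s(w,x1), s(w,x2), s(w,x3)} : Finset (Sym2 α))
      = ({x1, x2, x3} : Finset α).image (fun z => s(w,z)) := by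
    simp [Finset.image_insert]
  have hsplit : ({s(v,x1), s(v,x2), s(v,x3), s(w,x1), s(w,x2), s(w,x3)} : Finset (Sym2 α))
      = ({s(v,x1), s(v,x2), s(v,x3)} : Finset (Sym2 α)) ∪ {s(w,x1), s(w,x2), s(w,x3)} := by
    ext e; simp only [Finset.mem_insert, Finset.mem_union, Finset.mem_singleton]; tauto
  have hdisj : Disjoint ({s(v,x1), s(v,x2), s(v,x3)} : Finset (Sym2 α))
      ({s(w,x1), s(w,x2), s(w,x3)} : Finset (Sym2 α)) := by
    rw [hEv, hEw, Finset.disjoint_left]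
    rintro e he hw'
    simp only [Finset.mem_image, Finset.mem_insert, Finset.mem_singleton] at he hw'
    obtain ⟨a, ha, rfl⟩ := he
    obtain ⟨b, hb, hba⟩ := hw'
    rw [Sym2.eq_iff] at hba
    rcases hba with ⟨h1, h2⟩ | ⟨h1, h2⟩
    · exact hvw h1.symm
    · rcases ha with rfl | rfl | rfl
      · exact hx1w h1.symm
      · exact hx2w h1.symm
      · exact hx3w h1.symm
  have hinj : Function.Injective (fun z : α => s(v, z)) := fun a b h => Sym2.congr_right.mp h
  have hinjw : Function.Injective (fun z : α => s(w, z)) := fun a b h => Sym2.congr_right.mp h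
  have hcard : ({s(v,x1), s(v,x2), s(v,x3), s(w,x1), s(w,x2), s(w,x3)} : Finset (Sym2 α)).card = 6 := by
    rw [hsplit, Finset.card_union_of_disjoint hdisj, hEv, hEw,
      Finset.card_image_of_injective _ hinj, Finset.card_image_of_injective _ hinjw, hX]
  rw [hcard]
  have := card_le_list v w x1 x2 x3
  omega

lemma card_pattern2 {α : Type*} [DecidableEq α] {v w1 w2 x1 x2 y1 y2 : α}
    (hvw1 : v ≠ w1) (hvw2 : v ≠ w2) (hw12 : w1 ≠ w2)
    (hx12 : x1 ≠ x2) (hy12 : y1 ≠ y2)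
    (hx1v : x1 ≠ v) (hx2v : x2 ≠ v) (hx1w : x1 ≠ w1) (hx2w : x2 ≠ w1)
    (hy1v : y1 ≠ v) (hy2v : y2 ≠ v) (hy1w : y1 ≠ w2) (hy2w : y2 ≠ w2) :
    ({v, w1, w2, x1, x2, y1, y2} : Finset α).card + 1 ≤
      ({s(v,x1), s(v,x2), s(v,y1), s(v,y2), s(w1,x1), s(w1,x2), s(w2,y1), s(w2,y2)} :
        Finset (Sym2 α)).card := by
  have hvx1 : v ≠ x1 := hx1v.symm
  have hvx2 : v ≠ x2 := hx2v.symm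
  have hvy1 : v ≠ y1 := hy1v.symm
  have hvy2 : v ≠ y2 := hy2v.symm
  have hEv : ({s(v,x1), s(v,x2), s(v,y1), s(v,y2)} : Finset (Sym2 α))
      = ({x1, x2, y1, y2} : Finset α).image (fun z => s(v,z)) := by
    simp [Finset.image_insert]
  have hsplit : ({s(v,x1), s(v,x2), s(v,y1), s(v,y2), s(w1,x1), s(w1,x2), s(w2,y1), s(w2,y2)} :
        Finset (Sym2 α))
      = ({s(v,x1), s(v,x2), s(v,y1), s(v,y2)} : Finset (Sym2 α))
          ∪ {s(w1,x1), s(w1,x2), s(w2,y1), s(w2,y2)} := by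
    ext e
    simp only [Finset.mem_insert, Finset.mem_union, Finset.mem_singleton]
    tauto
  have hdisj : Disjoint ({s(v,x1), s(v,x2), s(v,y1), s(v,y2)} : Finset (Sym2 α))
      ({s(w1,x1), s(w1,x2), s(w2,y1), s(w2,y2)} : Finset (Sym2 α)) := by
    rw [hEv, Finset.disjoint_left]
    rintro e he hw'
    simp only [Finset.mem_image] at he
    obtain ⟨z, hz, rfl⟩ := he
    simp only [Finset.mem_insert, Finset.mem_singleton, Sym2.eq_iff] at hw'
    rcases hw' with (⟨h1, h2⟩ | ⟨h1, h2⟩) | (⟨h1, h2⟩ | ⟨h1, h2⟩) | (⟨h1, h2⟩ | ⟨h1, h2⟩) |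
        (⟨h1, h2⟩ | ⟨h1, h2⟩)
    · exact hvw1 h1
    · exact hvx1 h1
    · exact hvw1 h1
    · exact hvx2 h1
    · exact hvw2 h1
    · exact hvy1 h1
    · exact hvw2 h1
    · exact hvy2 h1
  have hinj : Function.Injective (fun z : α => s(v, z)) := fun a b h => Sym2.congr_right.mp h
  have hcard : ({s(v,x1), s(v,x2), s(v,y1), s(v,y2), s(w1,x1), s(w1,x2), s(w2,y1), s(w2,y2)} :
      Finset (Sym2 α)).card = ({x1, x2, y1, y2} : Finset α).card
        + ({s(w1,x1), s(w1,x2), s(w2,y1), s(w2,y2)} : Finset (Sym2 α)).card := by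
    rw [hsplit, Finset.card_union_of_disjoint hdisj, hEv, Finset.card_image_of_injective _ hinj]
  rw [hcard]
  by_cases hb : (w2 = x1 ∨ w2 = x2) ∧ (w1 = y1 ∨ w1 = y2)
  · have hw2X : w2 ∈ ({x1, x2, y1, y2} : Finset α) := by
      rcases hb.1 with rfl | rfl <;> simp
    have hw1X : w1 ∈ ({x1, x2, y1, y2} : Finset α) := by
      rcases hb.2 with rfl | rfl <;> simp
    have h1 : ({v, w1, w2, x1, x2, y1, y2} : Finset α).card
        ≤ ({x1, x2, y1, y2} : Finset α).card + 1 := by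
      have hvert : ({v, w1, w2, x1, x2, y1, y2} : Finset α)
          = insert v ({x1, x2, y1, y2} : Finset α) := by
        show insert v (insert w1 (insert w2 ({x1, x2, y1, y2} : Finset α)))
            = insert v ({x1, x2, y1, y2} : Finset α)
        rw [Finset.insert_eq_self.mpr hw2X, Finset.insert_eq_self.mpr hw1X]
      rw [hvert]
      exact Finset.card_insert_le _ _
    have h2 : 2 ≤ ({s(w1,x1), s(w1,x2), s(w2,y1), s(w2,y2)} : Finset (Sym2 α)).card := by
      refine Finset.one_lt_card_iff.mpr ⟨s(w1,x1), s(w1,x2), by simp, by simp, ?_⟩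
      intro h
      rw [Sym2.eq_iff] at h
      rcases h with ⟨-, h⟩ | ⟨-, h⟩
      · exact hx12 h
      · exact hx1w h
    omega
  · have h1 : ({v, w1, w2, x1, x2, y1, y2} : Finset α).card
        ≤ ({x1, x2, y1, y2} : Finset α).card + 3 := by
      have c1 := Finset.card_insert_le v (insert w1 (insert w2 ({x1, x2, y1, y2} : Finset α)))
      have c2 := Finset.card_insert_le w1 (insert w2 ({x1, x2, y1, y2} : Finset α))
      have c3 := Finset.card_insert_le w2 ({x1, x2, y1, y2} : Finset α)
      show (insert v (insert w1 (insert w2 ({x1, x2, y1, y2} : Finset α)))).card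
          ≤ ({x1, x2, y1, y2} : Finset α).card + 3
      omega
    have hxw2 : (x1 ≠ w2 ∧ x2 ≠ w2) ∨ (w1 ≠ y1 ∧ w1 ≠ y2) := by
      rw [not_and_or] at hb
      rcases hb with hb | hb
      · push_neg at hb
        exact Or.inl ⟨hb.1.symm, hb.2.symm⟩
      · push_neg at hb
        exact Or.inr hb
    have m1 : s(w1,x1) ∉ ({s(w1,x2), s(w2,y1), s(w2,y2)} : Finset (Sym2 α)) := by
      simp only [Finset.mem_insert, Finset.mem_singleton]
      rintro (h | h | h) <;> rw [Sym2.eq_iff] at h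
      · rcases h with ⟨-, h⟩ | ⟨-, h⟩
        · exact hx12 h
        · exact hx1w h
      · rcases h with ⟨h, -⟩ | ⟨h1', h2'⟩
        · exact hw12 h
        · rcases hxw2 with ⟨ha, -⟩ | ⟨ha, -⟩
          · exact ha h2'
          · exact ha h1'
      · rcases h with ⟨h, -⟩ | ⟨h1', h2'⟩
        · exact hw12 h
        · rcases hxw2 with ⟨ha, -⟩ | ⟨-, ha⟩
          · exact ha h2'
          · exact ha h1'
    have m2 : s(w1,x2) ∉ ({s(w2,y1), s(w2,y2)} : Finset (Sym2 α)) := by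
      simp only [Finset.mem_insert, Finset.mem_singleton]
      rintro (h | h) <;> rw [Sym2.eq_iff] at h
      · rcases h with ⟨h, -⟩ | ⟨h1', h2'⟩
        · exact hw12 h
        · rcases hxw2 with ⟨-, ha⟩ | ⟨ha, -⟩
          · exact ha h2'
          · exact ha h1'
      · rcases h with ⟨h, -⟩ | ⟨h1', h2'⟩
        · exact hw12 h
        · rcases hxw2 with ⟨-, ha⟩ | ⟨-, ha⟩
          · exact ha h2'
          · exact ha h1'
    have m3 : s(w2,y1) ∉ ({s(w2,y2)} : Finset (Sym2 α)) := by
      simp only [Finset.mem_singleton]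
      intro h
      rw [Sym2.eq_iff] at h
      rcases h with ⟨-, h⟩ | ⟨h, -⟩
      · exact hy12 h
      · exact hy2w h.symm
    have h2 : ({s(w1,x1), s(w1,x2), s(w2,y1), s(w2,y2)} : Finset (Sym2 α)).card = 4 := by
      rw [Finset.card_insert_of_notMem m1, Finset.card_insert_of_notMem m2,
        Finset.card_insert_of_notMem m3, Finset.card_singleton]
    omega



def GoodP (n : ℕ) (G : SimpleGraph (Fin n)) : Prop :=
  ∀ v : Fin n,
    ({w : Fin n | w ≠ v ∧ codeg G v w = 2}).Subsingleton ∧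
    ∀ u : Fin n, u ≠ v → codeg G v u ≤ 2

def Con1 {n : ℕ} (f : Fin 5 → Fin n) : Prop :=
  f 2 ≠ f 3 ∧ f 2 ≠ f 4 ∧ f 3 ≠ f 4 ∧ f 2 ≠ f 0 ∧ f 3 ≠ f 0 ∧ f 4 ≠ f 0 ∧
    f 2 ≠ f 1 ∧ f 3 ≠ f 1 ∧ f 4 ≠ f 1 ∧ f 0 ≠ f 1

def S1 {n : ℕ} (f : Fin 5 → Fin n) : Finset (Sym2 (Fin n)) :=
  {s(f 0, f 2), s(f 0, f 3), s(f 0, f 4), s(f 1, f 2), s(f 1, f 3), s(f 1, f 4)}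

def Q1 {n : ℕ} (f : Fin 5 → Fin n) (G : SimpleGraph (Fin n)) : Prop :=
  Con1 f ∧ ↑(S1 f) ⊆ G.edgeSet

def Con2 {n : ℕ} (f : Fin 7 → Fin n) : Prop :=
  f 0 ≠ f 1 ∧ f 0 ≠ f 2 ∧ f 1 ≠ f 2 ∧ f 3 ≠ f 4 ∧ f 5 ≠ f 6 ∧
    f 3 ≠ f 0 ∧ f 4 ≠ f 0 ∧ f 3 ≠ f 1 ∧ f 4 ≠ f 1 ∧
    f 5 ≠ f 0 ∧ f 6 ≠ f 0 ∧ f 5 ≠ f 2 ∧ f 6 ≠ f 2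

def S2 {n : ℕ} (f : Fin 7 → Fin n) : Finset (Sym2 (Fin n)) :=
  {s(f 0, f 3), s(f 0, f 4), s(f 0, f 5), s(f 0, f 6),
   s(f 1, f 3), s(f 1, f 4), s(f 2, f 5), s(f 2, f 6)}

def Q2 {n : ℕ} (f : Fin 7 → Fin n) (G : SimpleGraph (Fin n)) : Prop :=
  Con2 f ∧ ↑(S2 f) ⊆ G.edgeSet

lemma image_subset_five {n : ℕ} (f : Fin 5 → Fin n) :
    Finset.univ.image f ⊆ {f 0, f 1, f 2, f 3, f 4} := by
  intro x hx
  obtain ⟨i, -, rfl⟩ := Finset.mem_image.mp hx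
  fin_cases i <;> simp

lemma image_subset_seven {n : ℕ} (f : Fin 7 → Fin n) :
    Finset.univ.image f ⊆ {f 0, f 1, f 2, f 3, f 4, f 5, f 6} := by
  intro x hx
  obtain ⟨i, -, rfl⟩ := Finset.mem_image.mp hx
  fin_cases i <;> simp

lemma gnp_Q1_le {n : ℕ} {p : ℝ} (hp0 : 0 ≤ p) (hp1 : p ≤ 1) (f : Fin 5 → Fin n) :
    gnpProb n p (Q1 f) ≤ p ^ ((Finset.univ.image f).card + 1) := by
  by_cases hc : Con1 f
  · obtain ⟨h23, h24, h34, h20, h30, h40, h21, h31, h41, h01⟩ := hc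
    have hdiag : ∀ e ∈ S1 f, ¬ e.IsDiag := by
      intro e he
      simp only [S1, Finset.mem_insert, Finset.mem_singleton] at he
      rcases he with rfl | rfl | rfl | rfl | rfl | rfl <;>
        rw [Sym2.mk_isDiag_iff] <;> intro h
      · exact h20 h.symm
      · exact h30 h.symm
      · exact h40 h.symm
      · exact h21 h.symm
      · exact h31 h.symm
      · exact h41 h.symm
    calc gnpProb n p (Q1 f) ≤ gnpProb n p (fun G => ↑(S1 f) ⊆ G.edgeSet) :=
          gnp_mono n p hp0 hp1 _ _ (fun G h => h.2)
      _ = p ^ (S1 f).card := sum_w_subsets n p (S1 f) hdiag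
      _ ≤ p ^ ((Finset.univ.image f).card + 1) := by
          refine pow_le_pow_of_le_one hp0 hp1 ?_
          have h1 : (Finset.univ.image f).card ≤ ({f 0, f 1, f 2, f 3, f 4} : Finset (Fin n)).card :=
            Finset.card_le_card (image_subset_five f)
          have h2 := card_pattern1 h23 h24 h34 h20 h30 h40 h21 h31 h41 h01
          rw [S1]
          omega
  · have hz : gnpProb n p (Q1 f) = 0 := by
      rw [gnpProb]
      exact Finset.sum_eq_zero fun G _ => if_neg (fun h => hc h.1)
    rw [hz]
    positivity

lemma gnp_Q2_le {n : ℕ} {p : ℝ} (hp0 : 0 ≤ p) (hp1 : p ≤ 1) (f : Fin 7 → Fin n) :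
    gnpProb n p (Q2 f) ≤ p ^ ((Finset.univ.image f).card + 1) := by
  by_cases hc : Con2 f
  · obtain ⟨h01, h02, h12, h34, h56, h30, h40, h31, h41, h50, h60, h52, h62⟩ := hc
    have hdiag : ∀ e ∈ S2 f, ¬ e.IsDiag := by
      intro e he
      simp only [S2, Finset.mem_insert, Finset.mem_singleton] at he
      rcases he with rfl | rfl | rfl | rfl | rfl | rfl | rfl | rfl <;>
        rw [Sym2.mk_isDiag_iff] <;> intro h
      · exact h30 h.symm
      · exact h40 h.symm
      · exact h50 h.symm
      · exact h60 h.symm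
      · exact h31 h.symm
      · exact h41 h.symm
      · exact h52 h.symm
      · exact h62 h.symm
    calc gnpProb n p (Q2 f) ≤ gnpProb n p (fun G => ↑(S2 f) ⊆ G.edgeSet) :=
          gnp_mono n p hp0 hp1 _ _ (fun G h => h.2)
      _ = p ^ (S2 f).card := sum_w_subsets n p (S2 f) hdiag
      _ ≤ p ^ ((Finset.univ.image f).card + 1) := by
          refine pow_le_pow_of_le_one hp0 hp1 ?_
          have h1 : (Finset.univ.image f).card
              ≤ ({f 0, f 1, f 2, f 3, f 4, f 5, f 6} : Finset (Fin n)).card :=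
            Finset.card_le_card (image_subset_seven f)
          have h2 := card_pattern2 h01 h02 h12 h34 h56 h30 h40 h31 h41 h50 h60 h52 h62
          rw [S2]
          omega
  · have hz : gnpProb n p (Q2 f) = 0 := by
      rw [gnpProb]
      exact Finset.sum_eq_zero fun G _ => if_neg (fun h => hc h.1)
    rw [hz]
    positivity

lemma extract {n : ℕ} (G : SimpleGraph (Fin n)) (hG : ¬ GoodP n G) :
    ∃ i : (Fin 5 → Fin n) ⊕ (Fin 7 → Fin n), Sum.elim Q1 Q2 i G := by
  rw [GoodP, not_forall] at hG
  obtain ⟨v, hv⟩ := hG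
  rw [not_and_or] at hv
  rcases hv with hv | hv
  · rw [Set.not_subsingleton_iff] at hv
    obtain ⟨w1, hw1, w2, hw2, hne⟩ := hv
    obtain ⟨hw1v, hcd1⟩ := hw1
    obtain ⟨hw2v, hcd2⟩ := hw2
    have h1 : 1 < (G.neighborSet v ∩ G.neighborSet w1).ncard := by
      rw [codeg] at hcd1; omega
    have h2 : 1 < (G.neighborSet v ∩ G.neighborSet w2).ncard := by
      rw [codeg] at hcd2; omega
    obtain ⟨x1, x2, hx1, hx2, hx12⟩ := (Set.one_lt_ncard_iff (Set.toFinite _)).mp h1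
    obtain ⟨y1, y2, hy1, hy2, hy12⟩ := (Set.one_lt_ncard_iff (Set.toFinite _)).mp h2
    obtain ⟨hx1v, hx1w⟩ := hx1
    obtain ⟨hx2v, hx2w⟩ := hx2
    obtain ⟨hy1v, hy1w⟩ := hy1
    obtain ⟨hy2v, hy2w⟩ := hy2
    refine ⟨Sum.inr ![v, w1, w2, x1, x2, y1, y2], ?_, ?_⟩
    · exact ⟨hw1v.symm, hw2v.symm, hne, hx12, hy12,
        hx1v.ne', hx2v.ne', hx1w.ne', hx2w.ne', hy1v.ne', hy2v.ne', hy1w.ne', hy2w.ne'⟩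
    · intro e he
      rw [Finset.mem_coe] at he
      simp only [S2, Finset.mem_insert, Finset.mem_singleton] at he
      rcases he with rfl | rfl | rfl | rfl | rfl | rfl | rfl | rfl <;>
        rw [SimpleGraph.mem_edgeSet]
      · exact hx1v
      · exact hx2v
      · exact hy1v
      · exact hy2v
      · exact hx1w
      · exact hx2w
      · exact hy1w
      · exact hy2w
  · push_neg at hv
    obtain ⟨u, huv, hcd⟩ := hv
    have h3 : 2 < (G.neighborSet v ∩ G.neighborSet u).ncard := by
      rw [codeg] at hcd; omega
    obtain ⟨x1, x2, x3, hx1, hx2, hx3, h12, h13, h23⟩ :=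
      (Set.two_lt_ncard_iff (Set.toFinite _)).mp h3
    obtain ⟨hx1v, hx1u⟩ := hx1
    obtain ⟨hx2v, hx2u⟩ := hx2
    obtain ⟨hx3v, hx3u⟩ := hx3
    refine ⟨Sum.inl ![v, u, x1, x2, x3], ?_, ?_⟩
    · exact ⟨h12, h13, h23, hx1v.ne', hx2v.ne', hx3v.ne',
        hx1u.ne', hx2u.ne', hx3u.ne', huv.symm⟩
    · intro e he
      rw [Finset.mem_coe] at he
      simp only [S1, Finset.mem_insert, Finset.mem_singleton] at he
      rcases he with rfl | rfl | rfl | rfl | rfl | rfl <;> rw [SimpleGraph.mem_edgeSet]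
      · exact hx1v
      · exact hx2v
      · exact hx3v
      · exact hx1u
      · exact hx2u
      · exact hx3u


lemma main_bound (n : ℕ) (p : ℝ) (hp0 : 0 ≤ p) (hp1 : p ≤ 1) :
    1 - ((5:ℝ)^5 * ∑ j ∈ Finset.range 6, ((n:ℝ)*p)^j
        + (7:ℝ)^7 * ∑ j ∈ Finset.range 8, ((n:ℝ)*p)^j) * p
      ≤ gnpProb n p (GoodP n) := by
  have hu := gnp_union n p hp0 hp1 (fun G => ¬ GoodP n G) (Sum.elim Q1 Q2)
    (fun G h => extract G h)
  rw [Fintype.sum_sum_type] at hu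
  have hA : ∑ f : Fin 5 → Fin n, gnpProb n p (Sum.elim Q1 Q2 (Sum.inl f))
      ≤ ((5:ℝ)^5 * ∑ j ∈ Finset.range 6, ((n:ℝ)*p)^j) * p := by
    calc ∑ f : Fin 5 → Fin n, gnpProb n p (Sum.elim Q1 Q2 (Sum.inl f))
        ≤ ∑ f : Fin 5 → Fin n, p ^ ((Finset.univ.image f).card + 1) :=
          Finset.sum_le_sum fun f _ => gnp_Q1_le hp0 hp1 f
      _ = (∑ f : Fin 5 → Fin n, p ^ (Finset.univ.image f).card) * p := by
          rw [Finset.sum_mul]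
          exact Finset.sum_congr rfl fun f _ => pow_succ p _
      _ ≤ ((5:ℝ)^5 * ∑ j ∈ Finset.range 6, ((n:ℝ)*p)^j) * p := by
          refine mul_le_mul_of_nonneg_right ?_ hp0
          exact_mod_cast sum_pow_image_card 5 n p hp0 hp1
  have hB : ∑ f : Fin 7 → Fin n, gnpProb n p (Sum.elim Q1 Q2 (Sum.inr f))
      ≤ ((7:ℝ)^7 * ∑ j ∈ Finset.range 8, ((n:ℝ)*p)^j) * p := by
    calc ∑ f : Fin 7 → Fin n, gnpProb n p (Sum.elim Q1 Q2 (Sum.inr f))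
        ≤ ∑ f : Fin 7 → Fin n, p ^ ((Finset.univ.image f).card + 1) :=
          Finset.sum_le_sum fun f _ => gnp_Q2_le hp0 hp1 f
      _ = (∑ f : Fin 7 → Fin n, p ^ (Finset.univ.image f).card) * p := by
          rw [Finset.sum_mul]
          exact Finset.sum_congr rfl fun f _ => pow_succ p _
      _ ≤ ((7:ℝ)^7 * ∑ j ∈ Finset.range 8, ((n:ℝ)*p)^j) * p := by
          refine mul_le_mul_of_nonneg_right ?_ hp0
          exact_mod_cast sum_pow_image_card 7 n p hp0 hp1
  have hc := gnp_compl n p (GoodP n)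
  have : gnpProb n p (fun G => ¬ GoodP n G)
      ≤ ((5:ℝ)^5 * ∑ j ∈ Finset.range 6, ((n:ℝ)*p)^j
        + (7:ℝ)^7 * ∑ j ∈ Finset.range 8, ((n:ℝ)*p)^j) * p := by
    rw [add_mul]
    linarith
  linarith


end GnpAux

theorem gnp_codegree' (p : ℕ → ℝ) (hp : ∀ n, p n ∈ Set.Icc (0 : ℝ) 1)
    (hsmall : ∀ n : ℕ, p n ≤ (Real.log n) ^ 9 / n) :
    Filter.Tendsto (fun n : ℕ => gnpProb n (p n) (GnpAux.GoodP n))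
      Filter.atTop (nhds 1) := by
  classical
  set g : ℕ → ℝ := fun n =>
    ((5:ℝ)^5 * ∑ j ∈ Finset.range 6, ((n:ℝ) * p n)^j
      + (7:ℝ)^7 * ∑ j ∈ Finset.range 8, ((n:ℝ) * p n)^j) * p n with hgdef
  have hg0 : ∀ n, 0 ≤ g n := by
    intro n
    have h0 := (hp n).1
    have hnp : (0:ℝ) ≤ (n:ℝ) * p n := by positivity
    refine mul_nonneg (add_nonneg ?_ ?_) h0 <;>
      exact mul_nonneg (by positivity) (Finset.sum_nonneg fun j _ => by positivity)
  have hgh : ∀ᶠ n : ℕ in Filter.atTop,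
      g n ≤ ((5:ℝ)^5 + 7^7) * 8 * 2^7 * (Real.log n ^ 72 / n) := by
    rw [Filter.eventually_atTop]
    refine ⟨3, fun n hn => ?_⟩
    have hn0 : (0:ℝ) < n := by positivity
    have hn3 : (3:ℝ) ≤ n := by exact_mod_cast hn
    have h0 := (hp n).1
    have hlog : 1 ≤ Real.log n := by
      rw [Real.le_log_iff_exp_le hn0]
      calc Real.exp 1 ≤ 2.7182818286 := (Real.exp_one_lt_d9).le
        _ ≤ 3 := by norm_num
        _ ≤ n := hn3
    have hlog0 : 0 ≤ Real.log n := by linarith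
    have hL1 : 1 ≤ Real.log n ^ 9 := one_le_pow₀ hlog
    have hL0 : 0 ≤ Real.log n ^ 9 := by positivity
    have hpn : p n ≤ Real.log n ^ 9 / n := hsmall n
    have hnp : (n:ℝ) * p n ≤ Real.log n ^ 9 := by
      calc (n:ℝ) * p n ≤ (n:ℝ) * (Real.log n ^ 9 / n) :=
            mul_le_mul_of_nonneg_left hpn (by positivity)
        _ = Real.log n ^ 9 := by field_simp
    have hnp0 : (0:ℝ) ≤ (n:ℝ) * p n := by positivity
    have hsum : ∀ m : ℕ, m ≤ 8 → ∑ j ∈ Finset.range m, ((n:ℝ) * p n)^j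
        ≤ 8 * (2 * Real.log n ^ 9) ^ 7 := by
      intro m hm
      calc ∑ j ∈ Finset.range m, ((n:ℝ) * p n)^j
          ≤ ∑ _j ∈ Finset.range m, (2 * Real.log n ^ 9) ^ 7 := by
            refine Finset.sum_le_sum fun j hj => ?_
            have hj8 : j ≤ 7 := by
              rw [Finset.mem_range] at hj; omega
            calc ((n:ℝ) * p n)^j ≤ (1 + (n:ℝ) * p n)^j :=
                  pow_le_pow_left₀ hnp0 (by linarith) j
              _ ≤ (1 + (n:ℝ) * p n)^7 := pow_le_pow_right₀ (by linarith) hj8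
              _ ≤ (2 * Real.log n ^ 9) ^ 7 :=
                  pow_le_pow_left₀ (by linarith) (by linarith) 7
        _ ≤ 8 * (2 * Real.log n ^ 9) ^ 7 := by
            rw [Finset.sum_const, Finset.card_range, nsmul_eq_mul]
            refine mul_le_mul_of_nonneg_right ?_ (by positivity)
            exact_mod_cast hm
    have hbound : g n ≤ ((5:ℝ)^5 + 7^7) * (8 * (2 * Real.log n ^ 9) ^ 7) * (Real.log n ^ 9 / n) := by
      rw [hgdef]
      have hc1 : (5:ℝ)^5 * ∑ j ∈ Finset.range 6, ((n:ℝ) * p n)^j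
          + (7:ℝ)^7 * ∑ j ∈ Finset.range 8, ((n:ℝ) * p n)^j
          ≤ ((5:ℝ)^5 + 7^7) * (8 * (2 * Real.log n ^ 9) ^ 7) := by
        have b1 := hsum 6 (by norm_num)
        have b2 := hsum 8 (by norm_num)
        have s1 : (0:ℝ) ≤ ∑ j ∈ Finset.range 6, ((n:ℝ) * p n)^j :=
          Finset.sum_nonneg fun j _ => by positivity
        nlinarith
      have hc0 : (0:ℝ) ≤ (5:ℝ)^5 * ∑ j ∈ Finset.range 6, ((n:ℝ) * p n)^j
          + (7:ℝ)^7 * ∑ j ∈ Finset.range 8, ((n:ℝ) * p n)^j := by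
        refine add_nonneg ?_ ?_ <;>
          exact mul_nonneg (by positivity) (Finset.sum_nonneg fun j _ => by positivity)
      have hq0 : (0:ℝ) ≤ Real.log n ^ 9 / n := by positivity
      exact mul_le_mul hc1 hpn h0 (by positivity)
    refine hbound.trans (le_of_eq ?_)
    rw [div_eq_mul_inv, div_eq_mul_inv]
    ring
  have hh : Filter.Tendsto (fun n : ℕ => ((5:ℝ)^5 + 7^7) * 8 * 2^7 * (Real.log n ^ 72 / n))
      Filter.atTop (nhds 0) := by
    have h1 := Real.tendsto_pow_log_div_mul_add_atTop 1 0 72 one_ne_zero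
    simp only [one_mul, add_zero] at h1
    have h2 : Filter.Tendsto (fun n : ℕ => Real.log n ^ 72 / (n:ℝ)) Filter.atTop (nhds 0) :=
      h1.comp tendsto_natCast_atTop_atTop
    simpa using h2.const_mul (((5:ℝ)^5 + 7^7) * 8 * 2^7)
  have hgz : Filter.Tendsto g Filter.atTop (nhds 0) :=
    squeeze_zero' (Filter.Eventually.of_forall hg0) hgh hh
  refine tendsto_of_tendsto_of_tendsto_of_le_of_le'
    (g := fun n : ℕ => 1 - g n) (h := fun _ : ℕ => (1:ℝ)) ?_ ?_ ?_ ?_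
  · simpa using (tendsto_const_nhds (x := (1:ℝ)) (f := Filter.atTop)).sub hgz
  · exact tendsto_const_nhds
  · exact Filter.Eventually.of_forall fun n =>
      GnpAux.main_bound n (p n) (hp n).1 (hp n).2
  · exact Filter.Eventually.of_forall fun n =>
      GnpAux.gnp_le_one n (p n) (hp n).1 (hp n).2 _


/-- **Lemma 3.10.** For `p ≤ log⁹ n / n`, a.a.s. in `G(n,p)`: for every vertex `v`, at most
one other vertex has codegree `2` with `v`, and every vertex distinct from `v` has codegree
at most `2` with `v` (hence all remaining vertices have codegree at most `1`). -/
theorem gnp_codegree (p : ℕ → ℝ) (hp : ∀ n, p n ∈ Set.Icc (0 : ℝ) 1)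
    (hsmall : ∀ n : ℕ, p n ≤ (Real.log n) ^ 9 / n) :
    Tendsto (fun n : ℕ => gnpProb n (p n) (fun G =>
        ∀ v : Fin n,
          ({w : Fin n | w ≠ v ∧ codeg G v w = 2}).Subsingleton ∧
          ∀ u : Fin n, u ≠ v → codeg G v u ≤ 2))
      atTop (nhds 1) := by
  exact gnp_codegree' p hp hsmall
end
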